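/- arXiv:2604.20631 — 4 statements merged into one kernel-verified Lean document; each statement's English description precedes it below -/
import Mathlib

section
/- Bipartite Curie–Weiss model, subcritical regime: let α_n > 0 with α_n → α̂ ∈ [0,1] and β ≤ 2/(1+α̂). Then the law of m^{(n)} under the deterministic Gibbs measure μ̄_{n,β} converges weakly to the Dirac measure at (0,0): for every bounded continuous φ:ℝ²→ℝ, Σ_{σ∈X_n} μ̄_{n,β}(σ) φ(m^{(n)}(σ)) → φ(0,0) as n→∞ along even n. -/
open MeasureTheory Finset Filter

noncomputable section

/-- Spin value associated with a Boolean. -/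
def spin (b : Bool) : ℝ := if b then 1 else -1

/-- The pair of community magnetizations `(m₁, m₂)` of a configuration. -/
def mag (n : ℕ) (σ : Fin n → Bool) : ℝ × ℝ :=
  ((2 / (n : ℝ)) * ∑ j : Fin n, (if (j : ℕ) < n / 2 then spin (σ j) else 0),
   (2 / (n : ℝ)) * ∑ j : Fin n, (if n / 2 ≤ (j : ℕ) then spin (σ j) else 0))

/-- `E_α(m)`. -/
def Ebil (a : ℝ) (m : ℝ × ℝ) : ℝ := (m.1 ^ 2 + m.2 ^ 2) / 4 + (a / 2) * m.1 * m.2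

/-- One-dimensional entropy term. -/
def entI (x : ℝ) : ℝ :=
  ((1 + x) / 2) * Real.log ((1 + x) / 2) + ((1 - x) / 2) * Real.log ((1 - x) / 2)

/-- Free energy functional `G_{α,β}`. -/
def Gfun (a β : ℝ) (m : ℝ × ℝ) : ℝ := β * Ebil a m - (entI m.1 + entI m.2)

/-- The bipartite Curie–Weiss Hamiltonian `H̄_n(σ) = −(n/2) E_{α_n}(m^{(n)}(σ))`. -/
def Hcw (a : ℝ) (n : ℕ) (σ : Fin n → Bool) : ℝ := -((n : ℝ) / 2) * Ebil a (mag n σ)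

/-- The bipartite Curie–Weiss partition function. -/
def Zcw (a β : ℝ) (n : ℕ) : ℝ := ∑ σ : Fin n → Bool, Real.exp (-β * Hcw a n σ)

/-- Expectation of an observable of the magnetization under the bipartite
Curie–Weiss Gibbs measure. -/
def cwExpect (a β : ℝ) (n : ℕ) (φ : ℝ × ℝ → ℝ) : ℝ :=
  (∑ σ : Fin n → Bool, Real.exp (-β * Hcw a n σ) * φ (mag n σ)) / Zcw a β n

/-! Grouping configurations by the numbers `p, q` of up spins in the two communities, the
entropy bound on binomial coefficients gives the magnetization pair Gibbs weight at most
`exp (k * Gfun a β _)`, while `Zcw a β (2 * k) ≥ 4 ^ k` because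
`Ebil a (x, y) + Ebil a (x, -y) ≥ 0`. The entropy beats the energy to fourth order,
`entI x + log 2 ≥ x ^ 2 / 2 + x ^ 4 / 12`, so even at criticality, and with the slack
`ε ^ 2 / 24` that absorbs `α n → α̂`, `Gfun ≤ 2 log 2 - ε ^ 4 / 48` outside the `ε`-ball: the
law of the magnetization puts mass at most `(k + 1) ^ 2 * exp (-k ε ^ 4 / 48)` there. -/

open Real

lemma entI_eq_neg_binEntropy (x : ℝ) : entI x = -binEntropy ((1 + x) / 2) := by
  rw [binEntropy, entI, Real.log_inv, Real.log_inv]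
  ring_nf

lemma entI_abs (x : ℝ) : entI |x| = entI x := by
  rcases abs_choice x with h | h <;> rw [h]
  unfold entI
  ring_nf

@[fun_prop]
lemma continuous_entI : Continuous entI := by
  simp only [funext entI_eq_neg_binEntropy]
  fun_prop

lemma hasDerivAt_entI {x : ℝ} (hx : |x| < 1) :
    HasDerivAt entI ((log (1 + x) - log (1 - x)) / 2) x := by
  obtain ⟨hx₁, hx₂⟩ := abs_lt.1 hx
  have h : HasDerivAt (fun y => -binEntropy ((1 + y) / 2))
      (-((log (1 - (1 + x) / 2) - log ((1 + x) / 2)) * (1 / 2))) x :=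
    ((hasDerivAt_binEntropy (by linarith) (by linarith)).comp x
      (((hasDerivAt_id' x).const_add 1).div_const 2)).neg
  rw [funext entI_eq_neg_binEntropy]
  convert h using 1
  rw [show 1 - (1 + x) / 2 = (1 - x) / 2 by ring, log_div (by linarith) two_ne_zero,
    log_div (by linarith) two_ne_zero]
  ring

lemma two_mul_add_le_log_sub_log {x : ℝ} (hx₀ : 0 ≤ x) (hx₁ : x < 1) :
    2 * x + 2 * x ^ 3 / 3 ≤ log (1 + x) - log (1 - x) := by
  have h := sum_le_hasSum (range 2) (fun i _ => by positivity)
    (hasSum_log_sub_log_of_abs_lt_one (abs_lt.2 ⟨by linarith, hx₁⟩))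
  norm_num [Finset.sum_range_succ] at h
  linarith

lemma quartic_le_entI_add_log_two {x : ℝ} (hx : |x| ≤ 1) :
    x ^ 2 / 2 + x ^ 4 / 12 ≤ entI x + log 2 := by
  set g : ℝ → ℝ := fun y => entI y + log 2 - y ^ 2 / 2 - y ^ 4 / 12
  have hg : ∀ y, |y| < 1 → HasDerivAt g ((log (1 + y) - log (1 - y)) / 2 - y - y ^ 3 / 3) y :=
    fun y hy => by
      refine ((((hasDerivAt_entI hy).add_const (log 2)).sub
        ((hasDerivAt_pow 2 y).div_const 2)).sub ((hasDerivAt_pow 4 y).div_const 12)).congr_deriv ?_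
      norm_num
      ring
  have hmono : MonotoneOn g (Set.Icc 0 1) := by
    have hint : ∀ y ∈ interior (Set.Icc (0 : ℝ) 1), |y| < 1 := fun y hy => by
      rw [interior_Icc] at hy
      exact abs_lt.2 ⟨by linarith [hy.1], hy.2⟩
    refine monotoneOn_of_deriv_nonneg (convex_Icc 0 1) (by fun_prop)
      (fun y hy => (hg y (hint y hy)).differentiableAt.differentiableWithinAt) fun y hy => ?_
    rw [(hg y (hint y hy)).deriv]
    rw [interior_Icc] at hy
    linarith [two_mul_add_le_log_sub_log hy.1.le hy.2]
  have hg₀ : g 0 = 0 := by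
    simp [g, entI]
    ring
  have key := hmono ⟨le_rfl, zero_le_one⟩ ⟨abs_nonneg x, hx⟩ (abs_nonneg x)
  simp only [hg₀, g, entI_abs, sq_abs, Even.pow_abs ⟨2, rfl⟩] at key
  linarith

lemma choose_mul_pow_mul_pow_le_one {x : ℝ} (hx₀ : 0 ≤ x) (hx₁ : x ≤ 1) {k p : ℕ} (hp : p ≤ k) :
    (k.choose p : ℝ) * (x ^ p * (1 - x) ^ (k - p)) ≤ 1 := by
  have h := single_le_sum (f := fun i => x ^ i * (1 - x) ^ (k - i) * (k.choose i : ℝ))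
    (fun i _ => by have := sub_nonneg.2 hx₁; positivity) (mem_range.2 (Nat.lt_succ_of_le hp))
  rw [← add_pow, add_sub_cancel, one_pow] at h
  linarith

lemma choose_le_exp_mul_binEntropy (k p : ℕ) :
    (k.choose p : ℝ) ≤ exp (k * binEntropy (p / k)) := by
  rcases Nat.eq_zero_or_pos p with rfl | hp₀
  · simp
  rcases le_or_gt k p with hkp | hpk
  · rcases hkp.eq_or_lt with rfl | hkp
    · simp [div_self (Nat.cast_ne_zero.2 hp₀.ne' : (k : ℝ) ≠ 0)]
    · simp [Nat.choose_eq_zero_of_lt hkp, exp_nonneg]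
  set x : ℝ := p / k
  have hk : (0 : ℝ) < k := by exact_mod_cast hp₀.trans hpk
  have hx₀ : 0 < x := by positivity
  have hx₁ : 0 < 1 - x := by
    rw [sub_pos, div_lt_one hk]
    exact_mod_cast hpk
  have hkx : (k : ℝ) * x = p := mul_div_cancel₀ _ hk.ne'
  have hexp : exp (k * binEntropy x) = (x ^ p * (1 - x) ^ (k - p))⁻¹ := by
    have hkx' : (k : ℝ) * (1 - x) = (k - p : ℕ) := by
      rw [Nat.cast_sub hpk.le, mul_one_sub, hkx]
    rw [binEntropy, mul_add, ← mul_assoc, ← mul_assoc, hkx, hkx', ← log_pow, ← log_pow, exp_add,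
      exp_log (by positivity), exp_log (by positivity), inv_pow, inv_pow, mul_inv]
  rw [hexp, ← one_div, le_div_iff₀ (by positivity)]
  exact choose_mul_pow_mul_pow_le_one hx₀.le (by linarith) hpk.le

def upCount {k : ℕ} (s : Fin k → Bool) : ℕ := #{i | s i}

def magOfCount (k p : ℕ) : ℝ := (2 * p - k) / k

lemma sum_spin {k : ℕ} (s : Fin k → Bool) : ∑ i, spin (s i) = 2 * upCount s - k := by
  have h : ∀ i, spin (s i) = 2 * (if s i then 1 else 0) - 1 := fun i => by
    unfold spin; split <;> norm_num
  simp only [h, sum_sub_distrib, ← mul_sum, sum_boole, upCount]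
  simp

lemma mag_append {k : ℕ} (s t : Fin k → Bool) :
    mag (k + k) (Fin.append s t) = (magOfCount k (upCount s), magOfCount k (upCount t)) := by
  have hk : (k + k) / 2 = k := by omega
  have h2 : (2 : ℝ) / (k + k : ℕ) = (k : ℝ)⁻¹ := by
    rw [Nat.cast_add, ← two_mul, div_mul_cancel_left₀ two_ne_zero]
  simp only [mag, hk, Fin.sum_univ_add, Fin.append_left, Fin.append_right, Fin.val_castAdd,
    Fin.val_natAdd, Fin.is_lt, if_true, if_false, sum_const_zero, add_zero, zero_add,
    Nat.le_add_right, not_lt.2 (Nat.le_add_right _ _), not_le.2 (Fin.is_lt _), sum_spin,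
    magOfCount, h2, inv_mul_eq_div]

lemma sum_upCount {M : Type*} [AddCommMonoid M] (k : ℕ) (f : ℕ → M) :
    ∑ s : Fin k → Bool, f (upCount s) = ∑ p ∈ range (k + 1), k.choose p • f p := by
  have hbij : Function.Bijective fun s : Fin k → Bool => ({i | s i} : Finset (Fin k)) := by
    refine Function.bijective_iff_has_inverse.2 ⟨fun A i => i ∈ A, fun s => ?_, fun A => ?_⟩ <;>
      ext <;> simp
  rw [Fintype.sum_bijective _ hbij (fun s => f (upCount s)) (fun A => f #A) fun _ => rfl,
    ← powerset_univ, sum_powerset_apply_card, card_univ, Fintype.card_fin]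

lemma sum_mag_eq_sum_choose (k : ℕ) (F : ℝ × ℝ → ℝ) :
    ∑ σ : Fin (2 * k) → Bool, F (mag (2 * k) σ) =
      ∑ p ∈ range (k + 1), ∑ q ∈ range (k + 1),
        (k.choose p : ℝ) * k.choose q * F (magOfCount k p, magOfCount k q) := by
  rw [two_mul, ← Fintype.sum_equiv (Fin.appendEquiv k k)
    (fun st => F (mag (k + k) (Fin.append st.1 st.2))) _ fun _ => rfl, Fintype.sum_prod_type]
  simp only [mag_append]
  rw [sum_upCount k fun p => ∑ t : Fin k → Bool, F (magOfCount k p, magOfCount k (upCount t))]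
  refine sum_congr rfl fun p _ => ?_
  rw [sum_upCount k fun q => F (magOfCount k p, magOfCount k q), smul_sum]
  refine sum_congr rfl fun q _ => ?_
  simp only [nsmul_eq_mul]
  ring

lemma abs_magOfCount_le_one {k p : ℕ} (hp : p ≤ k) : |magOfCount k p| ≤ 1 := by
  rcases Nat.eq_zero_or_pos k with rfl | hk
  · simp [magOfCount]
  have hk' : (0 : ℝ) < k := by exact_mod_cast hk
  have hp' : (p : ℝ) ≤ k := by exact_mod_cast hp
  rw [magOfCount, abs_div, Nat.abs_cast, div_le_one hk', abs_le]
  constructor <;> linarith [(p.cast_nonneg : (0 : ℝ) ≤ p)]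

lemma magOfCount_sub {k q : ℕ} (hq : q ≤ k) : magOfCount k (k - q) = -magOfCount k q := by
  rw [magOfCount, magOfCount, Nat.cast_sub hq, ← neg_div]
  ring_nf

lemma choose_le_exp_neg_mul_entI (k p : ℕ) :
    (k.choose p : ℝ) ≤ exp (-(k * entI (magOfCount k p))) := by
  rcases Nat.eq_zero_or_pos k with rfl | hk
  · rcases p with _ | p <;> simp
  have hk' : (k : ℝ) ≠ 0 := by positivity
  have h : (1 + magOfCount k p) / 2 = p / k := by
    rw [magOfCount]
    field_simp
    ring
  rw [entI_eq_neg_binEntropy, h, mul_neg, neg_neg]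
  exact choose_le_exp_mul_binEntropy k p

lemma neg_mul_Hcw_two_mul (a β : ℝ) (k : ℕ) (σ : Fin (2 * k) → Bool) :
    -β * Hcw a (2 * k) σ = β * k * Ebil a (mag (2 * k) σ) := by
  rw [Hcw]
  push_cast
  ring

lemma sum_exp_mul_eq_sum_choose (a β : ℝ) (k : ℕ) (g : ℝ × ℝ → ℝ) :
    ∑ σ : Fin (2 * k) → Bool, exp (-β * Hcw a (2 * k) σ) * g (mag (2 * k) σ) =
      ∑ p ∈ range (k + 1), ∑ q ∈ range (k + 1), (k.choose p : ℝ) * k.choose q *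
        (exp (β * k * Ebil a (magOfCount k p, magOfCount k q)) *
          g (magOfCount k p, magOfCount k q)) := by
  simp only [neg_mul_Hcw_two_mul]
  exact sum_mag_eq_sum_choose k fun m => exp (β * k * Ebil a m) * g m

lemma Ebil_add_Ebil_neg_snd (a : ℝ) (x y : ℝ) :
    Ebil a (x, y) + Ebil a (x, -y) = (x ^ 2 + y ^ 2) / 2 := by
  simp only [Ebil]
  ring

lemma two_le_exp_add_exp {u v : ℝ} (h : 0 ≤ u + v) : 2 ≤ exp u + exp v := by
  linarith [add_one_le_exp u, add_one_le_exp v]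

lemma four_pow_le_Zcw (a : ℝ) {β : ℝ} (hβ : 0 ≤ β) (k : ℕ) : (4 : ℝ) ^ k ≤ Zcw a β (2 * k) := by
  set c : ℕ → ℝ := fun p => k.choose p
  set w : ℝ → ℝ → ℝ := fun x y => exp (β * k * Ebil a (x, y))
  have hZ : Zcw a β (2 * k) = ∑ p ∈ range (k + 1), ∑ q ∈ range (k + 1),
      c p * c q * w (magOfCount k p) (magOfCount k q) := by
    simpa [Zcw] using sum_exp_mul_eq_sum_choose a β k 1
  have hZ_flip : Zcw a β (2 * k) = ∑ p ∈ range (k + 1), ∑ q ∈ range (k + 1),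
      c p * c q * w (magOfCount k p) (-magOfCount k q) := by
    refine hZ.trans (sum_congr rfl fun p _ => ?_)
    rw [← sum_range_reflect]
    refine sum_congr rfl fun q hq => ?_
    have hq : q ≤ k := Nat.lt_succ_iff.1 (mem_range.1 hq)
    simp only [c, Nat.add_sub_cancel, Nat.choose_symm hq, magOfCount_sub hq]
  have hc : ∑ p ∈ range (k + 1), ∑ q ∈ range (k + 1), c p * c q = 4 ^ k := by
    rw [← sum_mul_sum]
    simp only [c, ← Nat.cast_sum, Nat.sum_range_choose]
    norm_num [← mul_pow]
  have h2 : ∑ p ∈ range (k + 1), ∑ q ∈ range (k + 1), c p * c q * 2 ≤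
      ∑ p ∈ range (k + 1), ∑ q ∈ range (k + 1), c p * c q *
        (w (magOfCount k p) (magOfCount k q) + w (magOfCount k p) (-magOfCount k q)) := by
    gcongr with p _ q _
    refine two_le_exp_add_exp ?_
    rw [← mul_add, Ebil_add_Ebil_neg_snd]
    positivity
  simp only [mul_add, sum_add_distrib, ← hZ, ← hZ_flip, ← sum_mul, hc] at h2
  linarith

lemma choose_mul_choose_mul_exp_le_exp_Gfun (a β : ℝ) (k p q : ℕ) :
    (k.choose p : ℝ) * k.choose q * exp (β * k * Ebil a (magOfCount k p, magOfCount k q)) ≤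
      exp (k * Gfun a β (magOfCount k p, magOfCount k q)) := by
  have h : k * Gfun a β (magOfCount k p, magOfCount k q) = -(k * entI (magOfCount k p)) +
      -(k * entI (magOfCount k q)) + β * k * Ebil a (magOfCount k p, magOfCount k q) := by
    rw [Gfun]
    ring
  rw [h, exp_add, exp_add]
  gcongr
  · exact choose_le_exp_neg_mul_entI k p
  · exact choose_le_exp_neg_mul_entI k q

lemma Ebil_le_sum_sq (a : ℝ) (m : ℝ × ℝ) : Ebil a m ≤ (1 + |a|) / 4 * (m.1 ^ 2 + m.2 ^ 2) := by
  have h₁ : a * (m.1 * m.2) ≤ |a| * |m.1 * m.2| := (le_abs_self _).trans (abs_mul _ _).le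
  have h₂ : 2 * |m.1 * m.2| ≤ m.1 ^ 2 + m.2 ^ 2 := by
    rw [abs_mul, ← mul_assoc, ← sq_abs m.1, ← sq_abs m.2]
    exact two_mul_le_add_sq |m.1| |m.2|
  rw [Ebil]
  nlinarith [abs_nonneg a]

lemma mul_sq_sub_entI_le {c δ x : ℝ} (hc : c ≤ 1 / 2 + δ) (hx : |x| ≤ 1) :
    c * x ^ 2 - entI x ≤ log 2 + δ * x ^ 2 - x ^ 4 / 12 := by
  nlinarith [quartic_le_entI_add_log_two hx, sq_nonneg x]

lemma Gfun_le_of_le_norm {a β ε : ℝ} {m : ℝ × ℝ} (hβ : 0 ≤ β)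
    (hc : β * (1 + |a|) / 4 ≤ 1 / 2 + ε ^ 2 / 24) (hε : 0 ≤ ε) (hεm : ε ≤ ‖m‖) (hm : ‖m‖ ≤ 1) :
    Gfun a β m ≤ 2 * log 2 - ε ^ 4 / 48 := by
  obtain ⟨hm₁, hm₂⟩ := max_le_iff.1 hm
  have hE : β * Ebil a m ≤ β * (1 + |a|) / 4 * (m.1 ^ 2 + m.2 ^ 2) := by
    have := mul_le_mul_of_nonneg_left (Ebil_le_sum_sq a m) hβ
    linarith
  have h₁ := mul_sq_sub_entI_le hc hm₁
  have h₂ := mul_sq_sub_entI_le hc hm₂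
  -- the site with `ε ≤ |m i|` has quartic deficit; the other site loses at most `3 (ε²/24)²`
  have hsite : ∀ x y : ℝ, ε ≤ |x| →
      ε ^ 2 / 24 * x ^ 2 - x ^ 4 / 12 + (ε ^ 2 / 24 * y ^ 2 - y ^ 4 / 12) ≤ -(ε ^ 4 / 48) :=
    fun x y hx => by
    have hx2 : ε ^ 2 ≤ x ^ 2 := by rw [← sq_abs x]; exact pow_le_pow_left₀ hε hx 2
    nlinarith [sq_nonneg (y ^ 2 - ε ^ 2 / 4), sq_nonneg ε,
      mul_le_mul_of_nonneg_left hx2 (sq_nonneg ε)]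
  rw [Gfun]
  rcases le_max_iff.1 hεm with h | h
  · nlinarith [hsite m.1 m.2 h]
  · nlinarith [hsite m.2 m.1 h]

lemma sum_exp_mul_indicator_le {a β ε : ℝ} (hβ : 0 ≤ β)
    (hc : β * (1 + |a|) / 4 ≤ 1 / 2 + ε ^ 2 / 24) (hε : 0 ≤ ε) (k : ℕ) :
    ∑ σ : Fin (2 * k) → Bool,
        exp (-β * Hcw a (2 * k) σ) * {m : ℝ × ℝ | ε ≤ ‖m‖}.indicator 1 (mag (2 * k) σ) ≤
      (k + 1) ^ 2 * (4 * exp (-(ε ^ 4 / 48))) ^ k := by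
  have hexp : exp (2 * log 2 - ε ^ 4 / 48) = 4 * exp (-(ε ^ 4 / 48)) := by
    rw [sub_eq_add_neg, exp_add, ← log_rpow two_pos, exp_log (by positivity)]
    norm_num
  rw [sum_exp_mul_eq_sum_choose]
  calc _ ≤ ∑ p ∈ range (k + 1), ∑ q ∈ range (k + 1), (4 * exp (-(ε ^ 4 / 48))) ^ k := by
        refine sum_le_sum fun p hp => sum_le_sum fun q hq => ?_
        set x : ℝ × ℝ := (magOfCount k p, magOfCount k q)
        by_cases hx : x ∈ {m : ℝ × ℝ | ε ≤ ‖m‖}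
        · have hx₁ : ‖x‖ ≤ 1 := max_le (abs_magOfCount_le_one (Nat.lt_succ_iff.1 (mem_range.1 hp)))
            (abs_magOfCount_le_one (Nat.lt_succ_iff.1 (mem_range.1 hq)))
          rw [Set.indicator_of_mem hx, Pi.one_apply, mul_one, ← hexp, ← exp_nat_mul]
          exact (choose_mul_choose_mul_exp_le_exp_Gfun a β k p q).trans <| exp_le_exp.2 <|
            mul_le_mul_of_nonneg_left (Gfun_le_of_le_norm hβ hc hε hx hx₁) k.cast_nonneg
        · rw [Set.indicator_of_notMem hx, mul_zero, mul_zero]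
          positivity
    _ = _ := by
        simp only [sum_const, card_range, nsmul_eq_mul]
        push_cast
        ring

lemma Zcw_pos (a β : ℝ) (n : ℕ) : 0 < Zcw a β n :=
  sum_pos (fun _ _ => exp_pos _) univ_nonempty

lemma cwExpect_nonneg {a β : ℝ} {n : ℕ} {g : ℝ × ℝ → ℝ} (hg : ∀ m, 0 ≤ g m) :
    0 ≤ cwExpect a β n g :=
  div_nonneg (sum_nonneg fun _ _ => mul_nonneg (exp_pos _).le (hg _)) (Zcw_pos a β n).le

lemma cwExpect_indicator_le {a β ε : ℝ} (hβ : 0 ≤ β)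
    (hc : β * (1 + |a|) / 4 ≤ 1 / 2 + ε ^ 2 / 24) (hε : 0 ≤ ε) (k : ℕ) :
    cwExpect a β (2 * k) ({m : ℝ × ℝ | ε ≤ ‖m‖}.indicator 1) ≤
      (k + 1) ^ 2 * exp (-(ε ^ 4 / 48)) ^ k := by
  rw [cwExpect, div_le_iff₀ (Zcw_pos a β _)]
  calc _ ≤ (k + 1) ^ 2 * (4 * exp (-(ε ^ 4 / 48))) ^ k := sum_exp_mul_indicator_le hβ hc hε k
    _ = (k + 1) ^ 2 * exp (-(ε ^ 4 / 48)) ^ k * 4 ^ k := by ring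
    _ ≤ _ := by gcongr; exact four_pow_le_Zcw a hβ k

lemma abs_cwExpect_sub_le {a β c r M : ℝ} {n : ℕ} {f g : ℝ × ℝ → ℝ}
    (h : ∀ m, |f m - c| ≤ r + M * g m) : |cwExpect a β n f - c| ≤ r + M * cwExpect a β n g := by
  have hZ := Zcw_pos a β n
  have hsub : cwExpect a β n f - c =
      (∑ σ, exp (-β * Hcw a n σ) * (f (mag n σ) - c)) / Zcw a β n := by
    simp only [cwExpect, Zcw, mul_sub, sum_sub_distrib, ← sum_mul]
    field_simp
  have hbound : (r + M * cwExpect a β n g) * Zcw a β n =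
      ∑ σ, exp (-β * Hcw a n σ) * (r + M * g (mag n σ)) := by
    simp only [cwExpect, Zcw, mul_add, sum_add_distrib, ← sum_mul, mul_left_comm _ M, ← mul_sum]
    field_simp
  rw [hsub, abs_div, abs_of_pos hZ, div_le_iff₀ hZ, hbound]
  refine (abs_sum_le_sum_abs _ _).trans (sum_le_sum fun σ _ => ?_)
  rw [abs_mul, abs_of_pos (exp_pos _)]
  exact mul_le_mul_of_nonneg_left (h _) (exp_pos _).le

lemma tendsto_cwExpect_of_tendsto_indicator {ι : Type*} {l : Filter ι} {a : ι → ℝ} {β : ℝ}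
    {n : ι → ℕ}
    (h : ∀ ε > 0, Tendsto (fun i => cwExpect (a i) β (n i) ({m : ℝ × ℝ | ε ≤ ‖m‖}.indicator 1))
      l (nhds 0))
    (φ : BoundedContinuousFunction (ℝ × ℝ) ℝ) :
    Tendsto (fun i => cwExpect (a i) β (n i) (fun m => φ m)) l (nhds (φ (0, 0))) := by
  rw [Metric.tendsto_nhds]
  intro η hη
  obtain ⟨ε, hε, hφε⟩ := Metric.continuousAt_iff.1 φ.continuous.continuousAt (η / 2) (half_pos hη)
  have hbound (m : ℝ × ℝ) :
      |φ m - φ (0, 0)| ≤ η / 2 + 2 * ‖φ‖ * {m : ℝ × ℝ | ε ≤ ‖m‖}.indicator 1 m := by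
    by_cases hm : m ∈ {m : ℝ × ℝ | ε ≤ ‖m‖}
    · rw [Set.indicator_of_mem hm, Pi.one_apply, mul_one, ← Real.dist_eq]
      linarith [φ.dist_le_two_norm m (0, 0)]
    · rw [Set.indicator_of_notMem hm, mul_zero, add_zero, ← Real.dist_eq]
      exact (hφε (by simpa [← Prod.zero_eq_mk, dist_zero_right] using hm)).le
  have hlim := ((h ε hε).const_mul (2 * ‖φ‖)).const_add (η / 2)
  rw [mul_zero, add_zero] at hlim
  filter_upwards [hlim.eventually (gt_mem_nhds (half_lt_self hη))] with i hi
  rw [Real.dist_eq]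
  exact (abs_cwExpect_sub_le hbound).trans_lt hi

lemma tendsto_cwExpect_indicator_zero {α : ℕ → ℝ} {hatα β ε : ℝ}
    (hαlim : Tendsto α atTop (nhds hatα)) (hhatα : 0 ≤ hatα) (hβ : 0 ≤ β)
    (hcrit : β * (1 + hatα) ≤ 2) (hε : 0 < ε) :
    Tendsto (fun k : ℕ => cwExpect (α (2 * k)) β (2 * k) ({m : ℝ × ℝ | ε ≤ ‖m‖}.indicator 1))
      atTop (nhds 0) := by
  set r := exp (-(ε ^ 4 / 48))
  have hr : |r| < 1 := by
    rw [abs_of_pos (exp_pos _), exp_lt_one_iff]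
    linarith [pow_pos hε 4]
  have hdecay : Tendsto (fun k : ℕ => ((k : ℝ) + 1) ^ 2 * r ^ k) atTop (nhds 0) := by
    have h := ((tendsto_add_atTop_iff_nat 1).2
      (tendsto_pow_const_mul_const_pow_of_abs_lt_one 2 hr)).div_const r
    rw [zero_div] at h
    refine h.congr fun k => ?_
    rw [Nat.cast_succ, pow_succ r, mul_div_assoc, mul_div_cancel_right₀ _ (exp_pos _).ne']
  have hc : ∀ᶠ k : ℕ in atTop, β * (1 + |α (2 * k)|) / 4 ≤ 1 / 2 + ε ^ 2 / 24 := by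
    have h2k : Tendsto (fun k : ℕ => 2 * k) atTop atTop :=
      tendsto_atTop_mono (fun k => Nat.le_mul_of_pos_left k two_pos) tendsto_id
    have hlim : Tendsto (fun k : ℕ => β * (1 + |α (2 * k)|) / 4) atTop
        (nhds (β * (1 + hatα) / 4)) := by
      have := ((hαlim.comp h2k).abs.const_add 1).const_mul β |>.div_const 4
      rwa [abs_of_nonneg hhatα] at this
    exact hlim.eventually (ge_mem_nhds (by nlinarith [pow_pos hε 2]))
  exact squeeze_zero' (Eventually.of_forall fun k => cwExpect_nonneg (Set.indicator_nonneg
    fun _ _ => zero_le_one)) (hc.mono fun k hk => cwExpect_indicator_le hβ hk hε.le k) hdecay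

theorem cw_magnetization_subcritical_general
    (α : ℕ → ℝ) (hatα β : ℝ)
    (hαlim : Tendsto α atTop (nhds hatα))
    (hhatα : hatα ∈ Set.Icc (0 : ℝ) 1)
    (hβpos : 0 < β) (hβ : β ≤ 2 / (1 + hatα)) :
    ∀ φ : BoundedContinuousFunction (ℝ × ℝ) ℝ,
      Tendsto (fun k : ℕ => cwExpect (α (2 * k)) β (2 * k) (fun m => φ m))
        atTop (nhds (φ (0, 0))) := by
  have hcrit : β * (1 + hatα) ≤ 2 := (le_div_iff₀ (by linarith [hhatα.1])).1 hβ
  exact tendsto_cwExpect_of_tendsto_indicator fun ε hε =>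
    tendsto_cwExpect_indicator_zero hαlim hhatα.1 hβpos.le hcrit hε

/-- bipartite Curie–Weiss, subcritical regime `β ≤ 2/(1+α̂)`: the law of the
magnetization converges weakly to the Dirac mass at `(0,0)`. -/
theorem cw_magnetization_subcritical
    (α : ℕ → ℝ) (hatα β : ℝ)
    (hα : ∀ n, 0 < α n) (hαlim : Tendsto α atTop (nhds hatα))
    (hhatα : hatα ∈ Set.Icc (0 : ℝ) 1)
    (hβpos : 0 < β) (hβ : β ≤ 2 / (1 + hatα)) :
    ∀ φ : BoundedContinuousFunction (ℝ × ℝ) ℝ,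
      Tendsto (fun k : ℕ => cwExpect (α (2 * k)) β (2 * k) (fun m => φ m))
        atTop (nhds (φ (0, 0))) :=
  cw_magnetization_subcritical_general α hatα β hαlim hhatα hβpos hβ

end
end

section
/- Free energy of the bipartite Curie–Weiss model: let α_n ∈ [0,1] with α_n → α̂ ∈ [0,1] and β > 0. Then lim_{n→∞, n even} (1/(nβ)) log Z̄_{n,β} = (1/(2β)) sup_{m∈[−1,1]²} G_{α̂,β}(m). -/
open MeasureTheory Finset Filter

noncomputable section

/-! Splitting the spins into the two communities and counting up-spins in each,
`Z̄_{2k} = ∑_{j₁, j₂ ≤ k} C(k, j₁) C(k, j₂) exp (β k E_α(x_{j₁}, x_{j₂}))` with `x_j = 2 j / k - 1`.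
The binomial law with parameter `j / k` has its mode at `j`, so `C(k, j) exp (k I(x_j))` lies
in `[1 / (k + 1), 1]` and each term is `exp (k G_{α,β}(x_{j₁}, x_{j₂}))` up to a factor
`(k + 1)^{±2}`. Hence, up to `2 log (k + 1) / k`, `(1/k) log Z̄_{2k}` lies between `sup G_{α_{2k},β}`
and the value of `G_{α_{2k},β}` at grid points converging to a maximiser of `G_{α̂,β}`. Both bounds
tend to `sup G_{α̂,β}`: `G` is jointly continuous and the square is compact. -/

open Real Topology

namespace BipartiteCurieWeiss

section Counting

variable {ι : Type*} [Fintype ι]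

theorem sum_spin (τ : ι → Bool) :
    ∑ i, spin (τ i) = 2 * (#{i | τ i} : ℝ) - Fintype.card ι := by
  have h : ∀ b, spin b = 2 * (if b then (1 : ℝ) else 0) - 1 := by
    intro b; cases b <;> norm_num [spin]
  simp_rw [h, sum_sub_distrib, ← mul_sum, sum_boole]
  simp

theorem sum_boolFun_apply_card [DecidableEq ι] {M : Type*} [AddCommMonoid M] (f : ℕ → M) :
    ∑ τ : ι → Bool, f #{i | τ i} =
      ∑ m ∈ range (Fintype.card ι + 1), (Fintype.card ι).choose m • f m := by
  let e : (ι → Bool) ≃ Finset ι :=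
    { toFun τ := {i | τ i}
      invFun s i := decide (i ∈ s)
      left_inv τ := by ext i; simp
      right_inv s := by ext i; simp }
  calc ∑ τ : ι → Bool, f #{i | τ i} = ∑ s : Finset ι, f #s := e.sum_comp (fun s => f #s)
    _ = _ := by rw [← powerset_univ, sum_powerset_apply_card, card_univ]

end Counting

/-- Magnetization of a community of `k` spins, `j` of which are up. -/
def gridMag (k j : ℕ) : ℝ := 2 * ((j : ℝ) / k) - 1

theorem mag_append {k : ℕ} (hk : k ≠ 0) (τ₁ τ₂ : Fin k → Bool) :
    mag (k + k) (Fin.append τ₁ τ₂) = (gridMag k #{i | τ₁ i}, gridMag k #{i | τ₂ i}) := by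
  have hhalf : (k + k) / 2 = k := by omega
  have hk' : (k : ℝ) ≠ 0 := Nat.cast_ne_zero.mpr hk
  simp only [mag, hhalf, Fin.sum_univ_add, Fin.append_left, Fin.append_right, Fin.val_castAdd,
    Fin.val_natAdd, Fin.is_lt, if_true, add_lt_iff_neg_left, not_lt_zero, if_false,
    sum_const_zero, add_zero, zero_add, le_add_iff_nonneg_right, zero_le, not_le.mpr (Fin.is_lt _)]
  rw [sum_spin, sum_spin, Fintype.card_fin, gridMag, gridMag]
  push_cast
  refine Prod.ext ?_ ?_ <;> dsimp only <;> field_simp <;> ring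

theorem Zcw_add_self (a β : ℝ) {k : ℕ} (hk : k ≠ 0) :
    Zcw a β (k + k) = ∑ j₁ ∈ range (k + 1), ∑ j₂ ∈ range (k + 1),
      k.choose j₁ * k.choose j₂ * exp (β * k * Ebil a (gridMag k j₁, gridMag k j₂)) := by
  have hexp (σ : Fin (k + k) → Bool) : -β * Hcw a (k + k) σ = β * k * Ebil a (mag (k + k) σ) := by
    rw [Hcw]; push_cast; ring
  simp only [Zcw, hexp]
  rw [← (Fin.appendEquiv k k).sum_comp, Fintype.sum_prod_type]
  simp only [Fin.appendEquiv, Equiv.coe_fn_mk, mag_append hk]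
  have hcount := sum_boolFun_apply_card (ι := Fin k) (M := ℝ)
  simp only [Fintype.card_fin] at hcount
  rw [hcount fun j₁ =>
    ∑ τ₂ : Fin k → Bool, exp (β * k * Ebil a (gridMag k j₁, gridMag k #{i | τ₂ i}))]
  refine sum_congr rfl fun j₁ _ => ?_
  rw [hcount fun j₂ => exp (β * k * Ebil a (gridMag k j₁, gridMag k j₂)), nsmul_eq_mul, mul_sum]
  refine sum_congr rfl fun j₂ _ => ?_
  rw [nsmul_eq_mul]; ring

def binomTerm (k : ℕ) (p : ℝ) (i : ℕ) : ℝ := k.choose i * p ^ i * (1 - p) ^ (k - i)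

section Binomial

variable {k : ℕ} {p : ℝ}

theorem sum_binomTerm (k : ℕ) (p : ℝ) : ∑ i ∈ range (k + 1), binomTerm k p i = 1 := by
  have h := (add_pow p (1 - p) k).symm
  rw [add_sub_cancel, one_pow] at h
  rw [← h]
  exact sum_congr rfl fun i _ => by rw [binomTerm]; ring

theorem binomTerm_nonneg (hp₀ : 0 ≤ p) (hp₁ : p ≤ 1) (i : ℕ) : 0 ≤ binomTerm k p i := by
  have : 0 ≤ 1 - p := by linarith
  unfold binomTerm
  positivity

theorem binomTerm_le_one (hp₀ : 0 ≤ p) (hp₁ : p ≤ 1) (i : ℕ) : binomTerm k p i ≤ 1 := by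
  rcases le_or_gt i k with hi | hi
  · rw [← sum_binomTerm k p]
    exact single_le_sum (fun i _ => binomTerm_nonneg hp₀ hp₁ i) (mem_range.mpr (by omega))
  · simp [binomTerm, Nat.choose_eq_zero_of_lt hi]

theorem succ_mul_binomTerm_succ {i : ℕ} (hi : i < k) (p : ℝ) :
    (i + 1) * (1 - p) * binomTerm k p (i + 1) = (k - i) * p * binomTerm k p i := by
  have hchoose : (k.choose (i + 1) : ℝ) * (i + 1) = k.choose i * (k - i) := by
    rw [← Nat.cast_sub hi.le]; exact_mod_cast Nat.choose_succ_right_eq k i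
  have hpow : (1 - p) ^ (k - i) = (1 - p) ^ (k - (i + 1)) * (1 - p) := by
    rw [← pow_succ]; congr 1; omega
  rw [binomTerm, binomTerm, hpow]
  linear_combination (p ^ (i + 1) * (1 - p) ^ (k - (i + 1)) * (1 - p)) * hchoose

theorem binomTerm_le_binomTerm_succ {i j : ℕ} (hij : i < j) (hj : j ≤ k) :
    binomTerm k (j / k) i ≤ binomTerm k (j / k) (i + 1) := by
  have hk : (0 : ℝ) < k := by exact_mod_cast (show 0 < k by omega)
  have hp₀ : (0 : ℝ) ≤ j / k := by positivity
  have hp₁ : (j : ℝ) / k ≤ 1 := div_le_one_of_le₀ (by exact_mod_cast hj) hk.le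
  rcases hj.eq_or_lt with hjk | hjk
  · have hzero : binomTerm k (j / k) i = 0 := by
      rw [binomTerm, hjk, div_self hk.ne', sub_self, zero_pow (by omega), mul_zero]
    rw [hzero]
    exact binomTerm_nonneg hp₀ hp₁ _
  have hq : 0 < (i + 1) * (1 - (j : ℝ) / k) :=
    mul_pos (by positivity) (by rw [sub_pos, div_lt_one hk]; exact_mod_cast hjk)
  have hcoef : (k - i) * ((j : ℝ) / k) - (i + 1) * (1 - j / k) = j + j / k - (i + 1) := by
    field_simp; ring
  have hij' : (i : ℝ) + 1 ≤ j := by exact_mod_cast hij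
  refine le_of_mul_le_mul_left ?_ hq
  rw [succ_mul_binomTerm_succ (by omega)]
  exact mul_le_mul_of_nonneg_right (by linarith) (binomTerm_nonneg hp₀ hp₁ i)

theorem binomTerm_succ_le_binomTerm {i j : ℕ} (hji : j ≤ i) (hj : j ≤ k) :
    binomTerm k (j / k) (i + 1) ≤ binomTerm k (j / k) i := by
  have hp₀ : (0 : ℝ) ≤ j / k := by positivity
  have hp₁ : (j : ℝ) / k ≤ 1 := div_le_one_of_le₀ (by exact_mod_cast hj) (Nat.cast_nonneg k)
  rcases le_or_gt k i with hki | hik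
  · have hzero : binomTerm k (j / k) (i + 1) = 0 := by
      rw [binomTerm, Nat.choose_eq_zero_of_lt (Nat.lt_succ_of_le hki), Nat.cast_zero, zero_mul,
        zero_mul]
    rw [hzero]
    exact binomTerm_nonneg hp₀ hp₁ i
  have hk : (0 : ℝ) < k := by exact_mod_cast (show 0 < k by omega)
  have hq : 0 < (i + 1) * (1 - (j : ℝ) / k) :=
    mul_pos (by positivity) (by rw [sub_pos, div_lt_one hk]; exact_mod_cast hji.trans_lt hik)
  have hcoef : (i + 1) * (1 - (j : ℝ) / k) - (k - i) * (j / k) = (i + 1) - j - j / k := by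
    field_simp; ring
  have hji' : (j : ℝ) ≤ i := by exact_mod_cast hji
  refine le_of_mul_le_mul_left ?_ hq
  rw [succ_mul_binomTerm_succ hik]
  exact mul_le_mul_of_nonneg_right (by linarith) (binomTerm_nonneg hp₀ hp₁ i)

theorem binomTerm_le_binomTerm_self {j : ℕ} (hj : j ≤ k) (i : ℕ) :
    binomTerm k (j / k) i ≤ binomTerm k (j / k) j := by
  rcases le_total i j with hij | hji
  · refine monotoneOn_of_le_succ Set.ordConnected_Iic (fun n _ _ hn => ?_) hij le_rfl hij
    rw [Order.succ_eq_add_one] at hn ⊢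
    exact binomTerm_le_binomTerm_succ (Set.mem_Iic.mp hn) hj
  · exact antitoneOn_nat_Ici_of_succ_le (fun n hn => binomTerm_succ_le_binomTerm hn hj)
      (le_refl j) hji hji

theorem one_le_succ_mul_binomTerm_self {j : ℕ} (hj : j ≤ k) :
    1 ≤ (k + 1) * binomTerm k (j / k) j :=
  calc 1 = ∑ i ∈ range (k + 1), binomTerm k (j / k) i := (sum_binomTerm k _).symm
    _ ≤ ∑ _i ∈ range (k + 1), binomTerm k (j / k) j :=
      sum_le_sum fun i _ => binomTerm_le_binomTerm_self hj i
    _ = (k + 1) * binomTerm k (j / k) j := by simp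

end Binomial

def magSquare : Set (ℝ × ℝ) := Set.Icc (-1) 1 ×ˢ Set.Icc (-1) 1

theorem isCompact_magSquare : IsCompact magSquare := isCompact_Icc.prod isCompact_Icc

theorem continuous_entI : Continuous entI := by
  unfold entI
  exact (continuous_mul_log.comp (by fun_prop)).add (continuous_mul_log.comp (by fun_prop))

theorem continuous_uncurry_Gfun (β : ℝ) : Continuous (Function.uncurry fun a => Gfun a β) := by
  simp only [Function.uncurry_def, Gfun, Ebil]
  have := continuous_entI
  fun_prop

theorem continuous_Gfun (a β : ℝ) : Continuous (Gfun a β) :=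
  (continuous_uncurry_Gfun β).comp (Continuous.prodMk_right a)

theorem Gfun_le_sSup (a β : ℝ) {m : ℝ × ℝ} (hm : m ∈ magSquare) :
    Gfun a β m ≤ sSup (Gfun a β '' magSquare) :=
  le_csSup (isCompact_magSquare.image (continuous_Gfun a β)).bddAbove ⟨m, hm, rfl⟩

section PartitionFunction

variable {k : ℕ}

theorem gridMag_mem_Icc {j : ℕ} (hj : j ≤ k) : gridMag k j ∈ Set.Icc (-1) 1 := by
  have h₀ : (0 : ℝ) ≤ j / k := by positivity
  have h₁ : (j : ℝ) / k ≤ 1 := div_le_one_of_le₀ (by exact_mod_cast hj) (Nat.cast_nonneg k)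
  constructor <;> unfold gridMag <;> linarith

theorem exp_natCast_mul_log_div (hk : k ≠ 0) (j : ℕ) :
    exp (j * log (j / k)) = ((j : ℝ) / k) ^ j := by
  rcases Nat.eq_zero_or_pos j with rfl | hj
  · simp
  · rw [exp_nat_mul, exp_log (by positivity)]

theorem choose_mul_exp_mul_entI_gridMag (hk : k ≠ 0) {j : ℕ} (hj : j ≤ k) :
    k.choose j * exp (k * entI (gridMag k j)) = binomTerm k (j / k) j := by
  have hk' : (k : ℝ) ≠ 0 := Nat.cast_ne_zero.mpr hk
  have hcompl : 1 - (j : ℝ) / k = ((k - j : ℕ) : ℝ) / k := by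
    rw [Nat.cast_sub hj]; field_simp
  have hent : k * entI (gridMag k j) =
      j * log (j / k) + (k - j : ℕ) * log ((k - j : ℕ) / k) := by
    have h₁ : (1 + gridMag k j) / 2 = j / k := by unfold gridMag; ring
    have h₂ : (1 - gridMag k j) / 2 = ((k - j : ℕ) : ℝ) / k := by
      rw [← hcompl]; unfold gridMag; ring
    rw [entI, h₁, h₂]
    field_simp
  rw [hent, exp_add, exp_natCast_mul_log_div hk, exp_natCast_mul_log_div hk, binomTerm, hcompl]
  ring

theorem choose_mul_choose_mul_exp_eq (a β : ℝ) (hk : k ≠ 0) {j₁ j₂ : ℕ} (hj₁ : j₁ ≤ k)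
    (hj₂ : j₂ ≤ k) :
    k.choose j₁ * k.choose j₂ * exp (β * k * Ebil a (gridMag k j₁, gridMag k j₂)) =
      binomTerm k (j₁ / k) j₁ * binomTerm k (j₂ / k) j₂ *
        exp (k * Gfun a β (gridMag k j₁, gridMag k j₂)) := by
  rw [← choose_mul_exp_mul_entI_gridMag hk hj₁, ← choose_mul_exp_mul_entI_gridMag hk hj₂]
  have hsplit : β * k * Ebil a (gridMag k j₁, gridMag k j₂) =
      k * entI (gridMag k j₁) + k * entI (gridMag k j₂) +
        k * Gfun a β (gridMag k j₁, gridMag k j₂) := by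
    rw [Gfun]; ring
  rw [hsplit, exp_add, exp_add]
  ring

theorem Zcw_pos (a β : ℝ) (n : ℕ) : 0 < Zcw a β n :=
  sum_pos (fun _ _ => exp_pos _) univ_nonempty

theorem log_Zcw_add_self_le (a β : ℝ) (hk : k ≠ 0) :
    log (Zcw a β (k + k)) ≤ k * sSup (Gfun a β '' magSquare) + 2 * log (k + 1) := by
  set S := sSup (Gfun a β '' magSquare)
  have hterm : ∀ j₁ ∈ range (k + 1), ∀ j₂ ∈ range (k + 1),
      k.choose j₁ * k.choose j₂ * exp (β * k * Ebil a (gridMag k j₁, gridMag k j₂)) ≤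
        exp (k * S) := by
    intro j₁ hj₁ j₂ hj₂
    have hj₁ : j₁ ≤ k := Nat.lt_succ_iff.mp (mem_range.mp hj₁)
    have hj₂ : j₂ ≤ k := Nat.lt_succ_iff.mp (mem_range.mp hj₂)
    have hp (j : ℕ) : 0 ≤ (j : ℝ) / k := by positivity
    have hp' {j : ℕ} (hj : j ≤ k) : (j : ℝ) / k ≤ 1 :=
      div_le_one_of_le₀ (by exact_mod_cast hj) (Nat.cast_nonneg k)
    rw [choose_mul_choose_mul_exp_eq a β hk hj₁ hj₂]
    have hG : exp (k * Gfun a β (gridMag k j₁, gridMag k j₂)) ≤ exp (k * S) :=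
      exp_le_exp.mpr (mul_le_mul_of_nonneg_left
        (Gfun_le_sSup a β ⟨gridMag_mem_Icc hj₁, gridMag_mem_Icc hj₂⟩) (Nat.cast_nonneg k))
    calc _ ≤ 1 * exp (k * Gfun a β (gridMag k j₁, gridMag k j₂)) :=
          mul_le_mul_of_nonneg_right (mul_le_one₀ (binomTerm_le_one (hp _) (hp' hj₁) _)
            (binomTerm_nonneg (hp _) (hp' hj₂) _) (binomTerm_le_one (hp _) (hp' hj₂) _))
            (exp_pos _).le
      _ ≤ exp (k * S) := by rw [one_mul]; exact hG
  have hZ : Zcw a β (k + k) ≤ (k + 1) ^ 2 * exp (k * S) := by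
    rw [Zcw_add_self a β hk]
    calc _ ≤ ∑ _j₁ ∈ range (k + 1), ∑ _j₂ ∈ range (k + 1), exp (k * S) :=
          sum_le_sum fun j₁ hj₁ => sum_le_sum fun j₂ hj₂ => hterm j₁ hj₁ j₂ hj₂
      _ = (k + 1) ^ 2 * exp (k * S) := by simp; ring
  calc log (Zcw a β (k + k)) ≤ log ((k + 1) ^ 2 * exp (k * S)) := log_le_log (Zcw_pos a β _) hZ
    _ = k * S + 2 * log (k + 1) := by
      rw [log_mul (by positivity) (exp_ne_zero _), log_pow, log_exp]; push_cast; ring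

theorem le_log_Zcw_add_self (a β : ℝ) (hk : k ≠ 0) {j₁ j₂ : ℕ} (hj₁ : j₁ ≤ k) (hj₂ : j₂ ≤ k) :
    k * Gfun a β (gridMag k j₁, gridMag k j₂) - 2 * log (k + 1) ≤ log (Zcw a β (k + k)) := by
  set t := k.choose j₁ * k.choose j₂ * exp (β * k * Ebil a (gridMag k j₁, gridMag k j₂))
  have ht : exp (k * Gfun a β (gridMag k j₁, gridMag k j₂)) ≤ (k + 1) ^ 2 * t := by
    rw [show t = _ from choose_mul_choose_mul_exp_eq a β hk hj₁ hj₂]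
    have h₁ := one_le_succ_mul_binomTerm_self hj₁
    have h₂ := one_le_succ_mul_binomTerm_self hj₂
    calc _ = 1 * 1 * exp (k * Gfun a β (gridMag k j₁, gridMag k j₂)) := by ring
      _ ≤ ((k + 1) * binomTerm k (j₁ / k) j₁) * ((k + 1) * binomTerm k (j₂ / k) j₂) *
            exp (k * Gfun a β (gridMag k j₁, gridMag k j₂)) := by gcongr
      _ = _ := by ring
  have htZ : t ≤ Zcw a β (k + k) := by
    have hnn : ∀ p q : ℕ,
        0 ≤ (k.choose p : ℝ) * k.choose q * exp (β * k * Ebil a (gridMag k p, gridMag k q)) :=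
      fun p q => by positivity
    rw [Zcw_add_self a β hk]
    calc t ≤ ∑ q ∈ range (k + 1),
            k.choose j₁ * k.choose q * exp (β * k * Ebil a (gridMag k j₁, gridMag k q)) :=
          single_le_sum (fun q _ => hnn j₁ q) (mem_range.mpr (by omega))
      _ ≤ _ := single_le_sum (f := fun p => ∑ q ∈ range (k + 1),
            k.choose p * k.choose q * exp (β * k * Ebil a (gridMag k p, gridMag k q)))
          (fun p _ => sum_nonneg fun q _ => hnn p q) (mem_range.mpr (by omega))
  have hpos : (0 : ℝ) < (k + 1) ^ 2 := by positivity
  calc k * Gfun a β (gridMag k j₁, gridMag k j₂) - 2 * log (k + 1)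
      = log (exp (k * Gfun a β (gridMag k j₁, gridMag k j₂)) / (k + 1) ^ 2) := by
        rw [log_div (exp_ne_zero _) hpos.ne', log_exp, log_pow]; push_cast; ring
    _ ≤ log (Zcw a β (k + k)) :=
        log_le_log (by positivity) ((div_le_iff₀' hpos).mpr (ht.trans (by gcongr)))

end PartitionFunction

theorem tendsto_log_succ_div_atTop : Tendsto (fun k : ℕ => log (k + 1) / k) atTop (𝓝 0) := by
  have h := (tendsto_pow_log_div_mul_add_atTop 1 (-1) 1 one_ne_zero).comp
    (tendsto_atTop_add_const_right atTop 1 tendsto_natCast_atTop_atTop)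
  refine h.congr fun k => ?_
  simp

theorem floor_mul_le {x : ℝ} (hx : x ∈ Set.Icc (-1) 1) (k : ℕ) : ⌊(1 + x) / 2 * k⌋₊ ≤ k :=
  Nat.floor_le_of_le (mul_le_of_le_one_left (Nat.cast_nonneg k) (by linarith [hx.2]))

theorem tendsto_gridMag_floor {x : ℝ} (hx : x ∈ Set.Icc (-1) 1) :
    Tendsto (fun k : ℕ => gridMag k ⌊(1 + x) / 2 * k⌋₊) atTop (𝓝 x) := by
  have h := (((tendsto_nat_floor_mul_div_atTop (by linarith [hx.1] : 0 ≤ (1 + x) / 2)).comp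
    tendsto_natCast_atTop_atTop).const_mul 2).sub_const 1
  rwa [show 2 * ((1 + x) / 2) - 1 = x by ring] at h

theorem tendsto_log_Zcw_add_self_div {a : ℕ → ℝ} {a₀ : ℝ} (ha : Tendsto a atTop (𝓝 a₀))
    (β : ℝ) :
    Tendsto (fun k : ℕ => log (Zcw (a k) β (k + k)) / k) atTop
      (𝓝 (sSup (Gfun a₀ β '' magSquare))) := by
  have hG := continuous_uncurry_Gfun β
  obtain ⟨m, hm, hmax⟩ := isCompact_magSquare.exists_sSup_image_eq
    ⟨(0, 0), by simp [magSquare]⟩ (continuous_Gfun a₀ β).continuousOn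
  set g : ℕ → ℝ × ℝ := fun k =>
    (gridMag k ⌊(1 + m.1) / 2 * k⌋₊, gridMag k ⌊(1 + m.2) / 2 * k⌋₊)
  have hg : Tendsto g atTop (𝓝 m) :=
    (tendsto_gridMag_floor hm.1).prodMk_nhds (tendsto_gridMag_floor hm.2)
  have herr : Tendsto (fun k : ℕ => 2 * (log (k + 1) / k)) atTop (𝓝 0) := by
    simpa using tendsto_log_succ_div_atTop.const_mul 2
  have hupper : Tendsto (fun k => sSup (Gfun (a k) β '' magSquare) + 2 * (log (k + 1) / k))
      atTop (𝓝 (sSup (Gfun a₀ β '' magSquare))) := by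
    have hsup := isCompact_magSquare.continuous_sSup (f := fun a => Gfun a β) hG
    simpa using ((hsup.tendsto a₀).comp ha).add herr
  have hlower : Tendsto (fun k => Gfun (a k) β (g k) - 2 * (log (k + 1) / k))
      atTop (𝓝 (sSup (Gfun a₀ β '' magSquare))) := by
    rw [hmax]
    simpa using ((hG.tendsto (a₀, m)).comp (ha.prodMk_nhds hg)).sub herr
  refine tendsto_of_tendsto_of_tendsto_of_le_of_le' hlower hupper ?_ ?_
  · filter_upwards [eventually_ne_atTop 0] with k hk
    calc Gfun (a k) β (g k) - 2 * (log (k + 1) / k)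
        = (k * Gfun (a k) β (g k) - 2 * log (k + 1)) / k := by field_simp
      _ ≤ log (Zcw (a k) β (k + k)) / k := by
        gcongr
        exact le_log_Zcw_add_self (a k) β hk (floor_mul_le hm.1 k) (floor_mul_le hm.2 k)
  · filter_upwards [eventually_ne_atTop 0] with k hk
    calc log (Zcw (a k) β (k + k)) / k
        ≤ (k * sSup (Gfun (a k) β '' magSquare) + 2 * log (k + 1)) / k := by
          gcongr
          exact log_Zcw_add_self_le (a k) β hk
      _ = sSup (Gfun (a k) β '' magSquare) + 2 * (log (k + 1) / k) := by field_simp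

end BipartiteCurieWeiss

theorem cw_free_energy_general
    (α : ℕ → ℝ) (hatα β : ℝ)
    (hαlim : Tendsto α atTop (nhds hatα)) :
    Tendsto (fun k : ℕ => (1 / ((2 * k : ℝ) * β)) * Real.log (Zcw (α (2 * k)) β (2 * k)))
      atTop
      (nhds ((1 / (2 * β)) *
        sSup (Gfun hatα β '' (Set.Icc (-1 : ℝ) 1 ×ˢ Set.Icc (-1 : ℝ) 1)))) := by
  have heven : Tendsto (fun k : ℕ => 2 * k) atTop atTop :=
    tendsto_id.const_mul_atTop' two_pos
  refine ((BipartiteCurieWeiss.tendsto_log_Zcw_add_self_div (hαlim.comp heven) β).const_mul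
    (1 / (2 * β))).congr fun k => ?_
  simp only [Function.comp_apply, ← two_mul]
  ring

/-- free energy of the bipartite Curie–Weiss model:
`(1/(nβ)) log Z̄_{n,β} → (1/(2β)) sup_{m ∈ [−1,1]²} G_{α̂,β}(m)` along even `n`. -/
theorem cw_free_energy
    (α : ℕ → ℝ) (hatα β : ℝ)
    (hα : ∀ n, α n ∈ Set.Icc (0 : ℝ) 1) (hαlim : Tendsto α atTop (nhds hatα))
    (hhatα : hatα ∈ Set.Icc (0 : ℝ) 1) (hβ : 0 < β) :
    Tendsto (fun k : ℕ => (1 / ((2 * k : ℝ) * β)) * Real.log (Zcw (α (2 * k)) β (2 * k)))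
      atTop
      (nhds ((1 / (2 * β)) *
        sSup (Gfun hatα β '' (Set.Icc (-1 : ℝ) 1 ×ˢ Set.Icc (-1 : ℝ) 1)))) :=
  cw_free_energy_general α hatα β hαlim

end
end

section
/- Concentration of the random interaction: there exist constants c₀, c₁, c₂ > 0 such that for all sufficiently large even n, ℙ(Ω̄_n^c) ≤ c₀ n² (e^{−n c₁/2} + e^{−n c₂/2}), where Ω̄_n is the event that for every configuration σ ∈ X_n, |Σ_{(i,j)∈E⁺(σ)} (ξ_{ij}+ζ_{ij}) − p_n(|E_I⁺(σ)| + α_n |E_E⁺(σ)|)| ≤ ρ_n · p_n(|E_I⁺(σ)| + α_n |E_E⁺(σ)|). -/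
open MeasureTheory ProbabilityTheory Finset Filter

noncomputable section

/-- Internal (intra-community) edge: `i < j` and both in the same community. -/
def innerEdge (n i j : ℕ) : Prop := i < j ∧ j < n ∧ (j < n / 2 ∨ n / 2 ≤ i)

/-- External (inter-community) edge. -/
def outerEdge (n i j : ℕ) : Prop := i < n / 2 ∧ n / 2 ≤ j ∧ j < n

instance (n i j : ℕ) : Decidable (innerEdge n i j) := by unfold innerEdge; infer_instance
instance (n i j : ℕ) : Decidable (outerEdge n i j) := by unfold outerEdge; infer_instance

/-- The random Hamiltonian of the Ising model on the 2-community SBM. -/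
def Hrand {Ω : Type*} (p : ℕ → ℝ) (ξ ζ : ℕ → ℕ × ℕ → Ω → ℝ)
    (n : ℕ) (σ : Fin n → Bool) (ω : Ω) : ℝ :=
  -(1 / ((n : ℝ) * p n)) *
    ((∑ i : Fin n, ∑ j : Fin n,
        if innerEdge n i j then ξ n ((i : ℕ), (j : ℕ)) ω * spin (σ i) * spin (σ j) else 0) +
     (∑ i : Fin n, ∑ j : Fin n,
        if outerEdge n i j then ζ n ((i : ℕ), (j : ℕ)) ω * spin (σ i) * spin (σ j) else 0))

/-- The random partition function. -/
def Zrand {Ω : Type*} (p : ℕ → ℝ) (ξ ζ : ℕ → ℕ × ℕ → Ω → ℝ)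
    (β : ℝ) (n : ℕ) (ω : Ω) : ℝ :=
  ∑ σ : Fin n → Bool, Real.exp (-β * Hrand p ξ ζ n σ ω)

/-- Expectation of an observable of the magnetization under the random Gibbs measure. -/
def gibbsExpect {Ω : Type*} (p : ℕ → ℝ) (ξ ζ : ℕ → ℕ × ℕ → Ω → ℝ)
    (β : ℝ) (n : ℕ) (φ : ℝ × ℝ → ℝ) (ω : Ω) : ℝ :=
  (∑ σ : Fin n → Bool, Real.exp (-β * Hrand p ξ ζ n σ ω) * φ (mag n σ)) /
    Zrand p ξ ζ β n ω

/-- Edge index set (internal ⊕ external) of the graph on `n` vertices. -/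
def isEdge (n : ℕ) : (ℕ × ℕ) ⊕ (ℕ × ℕ) → Prop :=
  Sum.elim (fun e => innerEdge n e.1 e.2) (fun e => outerEdge n e.1 e.2)

/-- A family of real random variables is Bernoulli with parameter `q`. -/
def IsBernoulli {Ω : Type*} [MeasurableSpace Ω] (P : Measure Ω) (X : Ω → ℝ) (q : ℝ) : Prop :=
  Measurable X ∧ (∀ᵐ ω ∂P, X ω = 0 ∨ X ω = 1) ∧ P {ω | X ω = 1} = ENNReal.ofReal q

/-- The SBM randomness hypotheses: Bernoulli marginals and independence over edges. -/
def SBMHyp {Ω : Type*} [MeasurableSpace Ω] (P : Measure Ω)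
    (p α : ℕ → ℝ) (ξ ζ : ℕ → ℕ × ℕ → Ω → ℝ) : Prop :=
  (∀ n i j, innerEdge n i j → IsBernoulli P (ξ n (i, j)) (p n)) ∧
  (∀ n i j, outerEdge n i j → IsBernoulli P (ζ n (i, j)) (α n * p n)) ∧
  (∀ n, iIndepFun
    (fun e : {e : (ℕ × ℕ) ⊕ (ℕ × ℕ) // isEdge n e} => Sum.elim (ξ n) (ζ n) e.1) P)


/-- Total random interaction over aligned pairs `E⁺(σ)`. -/
def plusSum {Ω : Type*} (ξ ζ : ℕ → ℕ × ℕ → Ω → ℝ) (n : ℕ) (σ : Fin n → Bool) (ω : Ω) : ℝ :=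
  (∑ i : Fin n, ∑ j : Fin n,
      if innerEdge n (i : ℕ) (j : ℕ) ∧ σ i = σ j then ξ n ((i : ℕ), (j : ℕ)) ω else 0) +
  (∑ i : Fin n, ∑ j : Fin n,
      if outerEdge n (i : ℕ) (j : ℕ) ∧ σ i = σ j then ζ n ((i : ℕ), (j : ℕ)) ω else 0)

/-- `|E_I⁺(σ)|`: number of aligned internal edges. -/
def cardInnerPlus (n : ℕ) (σ : Fin n → Bool) : ℕ :=
  (Finset.univ.filter fun e : Fin n × Fin n =>
    innerEdge n (e.1 : ℕ) (e.2 : ℕ) ∧ σ e.1 = σ e.2).card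

/-- `|E_E⁺(σ)|`: number of aligned external edges. -/
def cardOuterPlus (n : ℕ) (σ : Fin n → Bool) : ℕ :=
  (Finset.univ.filter fun e : Fin n × Fin n =>
    outerEdge n (e.1 : ℕ) (e.2 : ℕ) ∧ σ e.1 = σ e.2).card

/-- The good event `Ω̄_n` on which the random interaction concentrates, uniformly over all
configurations. -/
def goodEvent {Ω : Type*} (p αs ρ : ℕ → ℝ) (ξ ζ : ℕ → ℕ × ℕ → Ω → ℝ) (n : ℕ) : Set Ω :=
  {ω | ∀ σ : Fin n → Bool,
    |plusSum ξ ζ n σ ω -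
        p n * ((cardInnerPlus n σ : ℝ) + αs n * (cardOuterPlus n σ : ℝ))| ≤
      ρ n * (p n * ((cardInnerPlus n σ : ℝ) + αs n * (cardOuterPlus n σ : ℝ)))}

/-- The bipartite Curie–Weiss Hamiltonian in edge form:
`H̄_n(σ) = −(1/n) Σ_{E_I} σ_i σ_j − (α_n/n) Σ_{E_E} σ_i σ_j`. -/
def HcwE (a : ℝ) (n : ℕ) (σ : Fin n → Bool) : ℝ :=
  -(1 / (n : ℝ)) * (∑ i : Fin n, ∑ j : Fin n,
      if innerEdge n (i : ℕ) (j : ℕ) then spin (σ i) * spin (σ j) else 0) -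
  (a / (n : ℝ)) * (∑ i : Fin n, ∑ j : Fin n,
      if outerEdge n (i : ℕ) (j : ℕ) then spin (σ i) * spin (σ j) else 0)

/-!
Writing `𝟙[σᵢ = σⱼ] = (1 + σᵢσⱼ) / 2`, the deviation of the aligned-edge sum from its mean
`p (|E_I⁺(σ)| + α |E_E⁺(σ)|)` splits as `C + B(σ)`, where `C` and `B(σ)` are sums of the centred
edge variables with weights `1/2` and `σᵢσⱼ/2`. Both have variance proxy `M/4`, where
`M = ∑ₑ qₑ ≥ p n (n - 2) / 4` is the total edge mass, while the mean is at least `M/2 - p n / 4`.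
A Chernoff bound for weighted centred Bernoulli sums, with `R = √(p n)` and `ρ ≥ 3/R`, gives
`P(|C| ≥ M/(8R)) ≤ 2 e^{-K/64}` and `P(|B(σ)| ≥ 5M/(4R)) ≤ 2 e^{-3K}` for `K = M/R² ≥ (n - 2)/4`;
since `3/4 > log 2`, the second bound survives the union bound over the `2ⁿ` configurations.
Halving the weights is what makes this work: a Chernoff bound applied to each `σ` directly only
gives about `e^{-9n/16}`, too weak against `2ⁿ` configurations.
-/

namespace Real

lemma exp_sub_one_sub_le {u : ℝ} (hu : |u| ≤ 1) : exp u - 1 - u ≤ u ^ 2 * (1 + |u|) / 2 := by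
  have h := (abs_sub_le_iff.mp (exp_bound hu (n := 3) (by norm_num))).1
  norm_num [Finset.sum_range_succ, Nat.factorial] at h
  have hcube : |u| ^ 3 = u ^ 2 * |u| := by rw [pow_succ, sq_abs]
  nlinarith [sq_nonneg u, abs_nonneg u]

end Real

namespace IsBernoulli

variable {Ω : Type*} [MeasurableSpace Ω] {P : Measure Ω} {X : Ω → ℝ} {q : ℝ}

lemma exp_mul_ae_eq (h : IsBernoulli P X q) (u : ℝ) :
    (fun ω => Real.exp (u * X ω)) =ᵐ[P]
      fun ω => 1 + {ω | X ω = 1}.indicator (fun _ => Real.exp u - 1) ω := by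
  filter_upwards [h.2.1] with ω hω
  rcases hω with h0 | h1 <;> simp [Set.indicator, *]

lemma integrable_exp_mul [IsFiniteMeasure P] (h : IsBernoulli P X q) (u : ℝ) :
    Integrable (fun ω => Real.exp (u * X ω)) P :=
  ((integrable_const 1).add ((integrable_const _).indicator
    (h.1 (measurableSet_singleton 1)))).congr (h.exp_mul_ae_eq u).symm

lemma integral_exp_mul [IsProbabilityMeasure P] (h : IsBernoulli P X q) (hq : 0 ≤ q) (u : ℝ) :
    ∫ ω, Real.exp (u * X ω) ∂P = 1 + q * (Real.exp u - 1) := by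
  have hA : MeasurableSet {ω | X ω = 1} := h.1 (measurableSet_singleton 1)
  rw [integral_congr_ae (h.exp_mul_ae_eq u),
    integral_add (integrable_const 1) ((integrable_const _).indicator hA),
    integral_indicator_const _ hA]
  simp [measureReal_def, h.2.2, hq]

lemma mgf_sub_le [IsProbabilityMeasure P] (h : IsBernoulli P X q) (hq : 0 ≤ q) {u : ℝ}
    (hu : |u| ≤ 1) :
    mgf (fun ω => X ω - q) P u ≤ Real.exp (q * (u ^ 2 * (1 + |u|) / 2)) := by
  have hmgf : mgf (fun ω => X ω - q) P u = Real.exp (-(u * q)) * (1 + q * (Real.exp u - 1)) := by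
    rw [mgf, ← h.integral_exp_mul hq, ← integral_const_mul]
    congr 1 with ω
    rw [← Real.exp_add]; ring_nf
  calc mgf (fun ω => X ω - q) P u
      ≤ Real.exp (-(u * q)) * Real.exp (q * (Real.exp u - 1)) := by
        rw [hmgf]; gcongr; linarith [Real.add_one_le_exp (q * (Real.exp u - 1))]
    _ = Real.exp (q * (Real.exp u - 1 - u)) := by rw [← Real.exp_add]; ring_nf
    _ ≤ _ := by gcongr; exact Real.exp_sub_one_sub_le hu

end IsBernoulli

section Chernoff

variable {Ω ι : Type*} [MeasurableSpace Ω] {P : Measure Ω} [IsProbabilityMeasure P] [Fintype ι]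
  {X : ι → Ω → ℝ} {q : ι → ℝ}

lemma measure_ge_sum_bernoulli_le (hind : iIndepFun X P) (hX : ∀ i, IsBernoulli P (X i) (q i))
    (hq : ∀ i, 0 ≤ q i) {w : ι → ℝ} (hw : ∀ i, |w i| ≤ 1) {t : ℝ} (ht0 : 0 ≤ t) (ht1 : t ≤ 1)
    (s : ℝ) :
    P {ω | s ≤ ∑ i, w i * (X i ω - q i)} ≤
      ENNReal.ofReal (Real.exp (t ^ 2 * (1 + t) / 2 * ∑ i, q i * w i ^ 2 - t * s)) := by
  set Z : ι → Ω → ℝ := fun i ω => w i * (X i ω - q i)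
  have hZind : iIndepFun Z P := hind.comp (fun i x => w i * (x - q i)) (fun i => by fun_prop)
  have hZmeas : ∀ i, Measurable (Z i) := fun i => ((hX i).1.sub_const _).const_mul _
  have hwt : ∀ i, |w i * t| ≤ t := fun i => by
    rw [abs_mul, abs_of_nonneg ht0]; exact mul_le_of_le_one_left ht0 (hw i)
  have hZint : ∀ i ∈ Finset.univ, Integrable (fun ω => Real.exp (t * Z i ω)) P := fun i _ => by
    have := ((hX i).integrable_exp_mul (t * w i)).const_mul (Real.exp (-(t * w i * q i)))
    refine this.congr (ae_of_all _ fun ω => ?_)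
    simp only [Z, ← Real.exp_add]; ring_nf
  have hZmgf : ∀ i ∈ Finset.univ,
      mgf (Z i) P t ≤ Real.exp (t ^ 2 * (1 + t) / 2 * (q i * w i ^ 2)) := fun i _ => by
    calc mgf (Z i) P t = mgf (fun ω => X i ω - q i) P (w i * t) := mgf_const_mul (w i)
      _ ≤ Real.exp (q i * ((w i * t) ^ 2 * (1 + |w i * t|) / 2)) :=
        (hX i).mgf_sub_le (hq i) ((hwt i).trans ht1)
      _ ≤ _ := by
        have hqw : 0 ≤ q i * (w i * t) ^ 2 := mul_nonneg (hq i) (sq_nonneg _)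
        refine Real.exp_le_exp.mpr ?_
        nlinarith [mul_le_mul_of_nonneg_left (hwt i) hqw]
  have hchernoff := measure_ge_le_exp_mul_mgf s ht0 (hZind.integrable_exp_mul_sum hZmeas hZint)
  rw [hZind.mgf_sum hZmeas] at hchernoff
  calc P {ω | s ≤ ∑ i, w i * (X i ω - q i)}
      = ENNReal.ofReal (P.real {ω | s ≤ (∑ i, Z i) ω}) := by
        simp only [Finset.sum_apply, Z]
        rw [ofReal_measureReal]
    _ ≤ ENNReal.ofReal
          (Real.exp (-t * s) * ∏ i, Real.exp (t ^ 2 * (1 + t) / 2 * (q i * w i ^ 2))) := by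
        gcongr
        exact hchernoff.trans (by gcongr with i hi; exacts [fun _ _ => mgf_nonneg, hZmgf i hi])
    _ = _ := by
        rw [← Real.exp_sum, ← Real.exp_add, ← Finset.mul_sum]; ring_nf

lemma measure_ge_abs_sum_bernoulli_le (hind : iIndepFun X P)
    (hX : ∀ i, IsBernoulli P (X i) (q i)) (hq : ∀ i, 0 ≤ q i) {w : ι → ℝ} (hw : ∀ i, |w i| ≤ 1)
    {t : ℝ} (ht0 : 0 ≤ t) (ht1 : t ≤ 1) (s : ℝ) :
    P {ω | s ≤ |∑ i, w i * (X i ω - q i)|} ≤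
      ENNReal.ofReal (2 * Real.exp (t ^ 2 * (1 + t) / 2 * ∑ i, q i * w i ^ 2 - t * s)) := by
  have hneg : ∀ ω, ∑ i, -w i * (X i ω - q i) = -∑ i, w i * (X i ω - q i) := fun ω => by
    simp only [neg_mul, Finset.sum_neg_distrib]
  have hsplit : {ω | s ≤ |∑ i, w i * (X i ω - q i)|} ⊆
      {ω | s ≤ ∑ i, w i * (X i ω - q i)} ∪ {ω | s ≤ ∑ i, -w i * (X i ω - q i)} := fun ω hω => by
    simp only [Set.mem_union, Set.mem_ofPred_eq, hneg]
    exact le_abs.mp hω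
  calc _ ≤ _ := measure_mono hsplit
    _ ≤ _ := measure_union_le _ _
    _ ≤ _ := add_le_add (measure_ge_sum_bernoulli_le hind hX hq hw ht0 ht1 s)
        (measure_ge_sum_bernoulli_le hind hX hq (w := fun i => -w i) (by simpa using hw) ht0 ht1 s)
    _ = _ := by
        simp only [neg_sq]
        rw [← ENNReal.ofReal_add (by positivity) (by positivity), two_mul]

end Chernoff

lemma two_mul_sum_ite_lt {α : Type*} [LinearOrder α] [Fintype α] (g : α → α → ℝ)
    (hg : ∀ i j, g i j = g j i) :
    2 * ∑ i, ∑ j, (if i < j then g i j else 0) = ∑ i, ∑ j, g i j - ∑ i, g i i := by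
  have hswap : ∑ i, ∑ j, (if j < i then g i j else 0) = ∑ i, ∑ j, (if i < j then g i j else 0) := by
    rw [Finset.sum_comm]; simp only [hg]
  have htrichotomy : ∀ i j, g i j = (if i < j then g i j else 0) + (if j < i then g i j else 0) +
      (if i = j then g i j else 0) := fun i j => by
    rcases lt_trichotomy i j with h | rfl | h
    · simp [h, h.not_gt, h.ne]
    · simp
    · simp [h, h.not_gt, h.ne']
  have hdiag : ∑ i, ∑ j, (if i = j then g i j else 0) = ∑ i, g i i := by simp
  conv_rhs => enter [1, 2, i, 2, j]; rw [htrichotomy i j]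
  simp only [Finset.sum_add_distrib, hswap, hdiag]
  ring

lemma spin_sq (b : Bool) : spin b ^ 2 = 1 := by cases b <;> simp [spin]

lemma ite_eq_one_add_spin_mul_div_two (b c : Bool) (x : ℝ) :
    (if b = c then x else 0) = (1 + spin b * spin c) / 2 * x := by
  cases b <;> cases c <;> simp [spin]

section TwoCommunities

variable {n : ℕ}

lemma innerEdge_iff (i j : Fin n) :
    innerEdge n i j ↔ i < j ∧ ((i : ℕ) < n / 2 ↔ (j : ℕ) < n / 2) := by
  simp only [innerEdge, Fin.lt_def]; omega

lemma outerEdge_iff (i j : Fin n) :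
    outerEdge n i j ↔ (i : ℕ) < n / 2 ∧ ¬ (j : ℕ) < n / 2 := by
  simp only [outerEdge]; omega

lemma not_outerEdge_of_innerEdge {i j : ℕ} (h : innerEdge n i j) : ¬ outerEdge n i j := by
  simp only [innerEdge, outerEdge] at *; omega

def firstHalfSum (n : ℕ) (x : Fin n → ℝ) : ℝ := ∑ i : Fin n, if (i : ℕ) < n / 2 then x i else 0

def secondHalfSum (n : ℕ) (x : Fin n → ℝ) : ℝ := ∑ i : Fin n, if (i : ℕ) < n / 2 then 0 else x i

lemma firstHalfSum_add_secondHalfSum (x : Fin n → ℝ) :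
    firstHalfSum n x + secondHalfSum n x = ∑ i, x i := by
  rw [firstHalfSum, secondHalfSum, ← Finset.sum_add_distrib]
  congr 1 with i; split_ifs <;> simp

lemma sum_innerEdge_mul (x : Fin n → ℝ) :
    ∑ i : Fin n, ∑ j : Fin n, (if innerEdge n i j then x i * x j else 0) =
      (firstHalfSum n x ^ 2 + secondHalfSum n x ^ 2 - ∑ i, x i ^ 2) / 2 := by
  set g : Fin n → Fin n → ℝ := fun i j =>
    if ((i : ℕ) < n / 2 ↔ (j : ℕ) < n / 2) then x i * x j else 0
  have hg : ∀ i j, g i j = g j i := fun i j => by simp only [g, iff_comm, mul_comm]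
  have hblocks : ∑ i, ∑ j, g i j = firstHalfSum n x ^ 2 + secondHalfSum n x ^ 2 := by
    rw [firstHalfSum, secondHalfSum, sq, sq, Finset.sum_mul_sum, Finset.sum_mul_sum,
      ← Finset.sum_add_distrib]
    refine Finset.sum_congr rfl fun i _ => ?_
    rw [← Finset.sum_add_distrib]
    refine Finset.sum_congr rfl fun j _ => ?_
    simp only [g]; split_ifs <;> simp_all
  have hdiag : ∑ i, g i i = ∑ i, x i ^ 2 := by simp [g, sq]
  have hinner : ∀ i j : Fin n,
      (if innerEdge n i j then x i * x j else 0) = if i < j then g i j else 0 := fun i j => by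
    simp only [innerEdge_iff, ite_and, g]
  simp only [hinner]
  linarith [two_mul_sum_ite_lt g hg]

lemma sum_outerEdge_mul (x : Fin n → ℝ) :
    ∑ i : Fin n, ∑ j : Fin n, (if outerEdge n i j then x i * x j else 0) =
      firstHalfSum n x * secondHalfSum n x := by
  rw [firstHalfSum, secondHalfSum, Finset.sum_mul_sum]
  refine Finset.sum_congr rfl fun i _ => Finset.sum_congr rfl fun j _ => ?_
  simp only [outerEdge_iff]; split_ifs <;> simp_all

end TwoCommunities

section Edges

variable {Ω : Type*} (p α : ℕ → ℝ) (ξ ζ : ℕ → ℕ × ℕ → Ω → ℝ) {n : ℕ}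

def edges (n : ℕ) : Finset (Fin n × Fin n) :=
  Finset.univ.filter fun e => innerEdge n e.1 e.2 ∨ outerEdge n e.1 e.2

def edgeProb (n : ℕ) (e : Fin n × Fin n) : ℝ :=
  if innerEdge n e.1 e.2 then p n else α n * p n

def edgeVar (n : ℕ) (e : Fin n × Fin n) (ω : Ω) : ℝ :=
  if innerEdge n e.1 e.2 then ξ n (e.1, e.2) ω else ζ n (e.1, e.2) ω

def edgeMass (n : ℕ) : ℝ := ∑ e ∈ edges n, edgeProb p α n e

def edgeDeviation (n : ℕ) (w : Fin n × Fin n → ℝ) (ω : Ω) : ℝ :=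
  ∑ e ∈ edges n, w e * (edgeVar ξ ζ n e ω - edgeProb p α n e)

lemma sum_edges_ite (f g : Fin n × Fin n → ℝ) :
    ∑ e ∈ edges n, (if innerEdge n e.1 e.2 then f e else g e) =
      ∑ i : Fin n, ∑ j : Fin n, (if innerEdge n i j then f (i, j) else 0) +
      ∑ i : Fin n, ∑ j : Fin n, (if outerEdge n i j then g (i, j) else 0) := by
  rw [edges, Finset.sum_filter, ← Fintype.sum_prod_type', ← Fintype.sum_prod_type',
    ← Finset.sum_add_distrib]
  refine Finset.sum_congr rfl fun e _ => ?_
  by_cases hin : innerEdge n e.1 e.2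
  · simp [hin, not_outerEdge_of_innerEdge hin]
  · by_cases hout : outerEdge n e.1 e.2 <;> simp [hin, hout]

lemma plusSum_eq_sum_edges (σ : Fin n → Bool) (ω : Ω) :
    plusSum ξ ζ n σ ω = ∑ e ∈ edges n, if σ e.1 = σ e.2 then edgeVar ξ ζ n e ω else 0 := by
  have hsplit : ∀ e : Fin n × Fin n, (if σ e.1 = σ e.2 then edgeVar ξ ζ n e ω else 0) =
      if innerEdge n e.1 e.2 then (if σ e.1 = σ e.2 then ξ n (e.1, e.2) ω else 0)
      else (if σ e.1 = σ e.2 then ζ n (e.1, e.2) ω else 0) := fun e => by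
    unfold edgeVar; split_ifs <;> rfl
  simp only [hsplit, sum_edges_ite, plusSum, ite_and]

lemma mul_cardInnerPlus_add_eq_sum_edges (σ : Fin n → Bool) :
    p n * ((cardInnerPlus n σ : ℝ) + α n * (cardOuterPlus n σ : ℝ)) =
      ∑ e ∈ edges n, if σ e.1 = σ e.2 then edgeProb p α n e else 0 := by
  have hsplit : ∀ e : Fin n × Fin n, (if σ e.1 = σ e.2 then edgeProb p α n e else 0) =
      if innerEdge n e.1 e.2 then (if σ e.1 = σ e.2 then p n else 0)
      else (if σ e.1 = σ e.2 then α n * p n else 0) := fun e => by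
    unfold edgeProb; split_ifs <;> rfl
  simp only [hsplit, sum_edges_ite, cardInnerPlus, cardOuterPlus, Finset.natCast_card_filter,
    Fintype.sum_prod_type, mul_add, Finset.mul_sum, ite_and, mul_ite, mul_one, mul_zero,
    mul_comm (p n) (α n)]

lemma plusSum_sub_eq_edgeDeviation_add (σ : Fin n → Bool) (ω : Ω) :
    plusSum ξ ζ n σ ω - p n * ((cardInnerPlus n σ : ℝ) + α n * (cardOuterPlus n σ : ℝ)) =
      edgeDeviation p α ξ ζ n (fun _ => 1 / 2) ω +
        edgeDeviation p α ξ ζ n (fun e => spin (σ e.1) * spin (σ e.2) / 2) ω := by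
  simp only [plusSum_eq_sum_edges, mul_cardInnerPlus_add_eq_sum_edges, edgeDeviation,
    ite_eq_one_add_spin_mul_div_two, ← Finset.sum_sub_distrib, ← Finset.sum_add_distrib]
  exact Finset.sum_congr rfl fun e _ => by ring

variable {p α}

lemma edgeProb_nonneg (hp : 0 ≤ p n) (hα : 0 ≤ α n) (e : Fin n × Fin n) :
    0 ≤ edgeProb p α n e := by
  unfold edgeProb; split_ifs <;> positivity

lemma edgeMass_nonneg (hp : 0 ≤ p n) (hα : 0 ≤ α n) : 0 ≤ edgeMass p α n :=
  Finset.sum_nonneg fun e _ => edgeProb_nonneg hp hα e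

lemma mul_le_sum_edges_edgeProb_mul (hp : 0 ≤ p n) (hα : α n ∈ Set.Icc 0 1) (x : Fin n → ℝ) :
    p n * ((∑ i, x i) ^ 2 / 4 - (∑ i, x i ^ 2) / 2) ≤
      ∑ e ∈ edges n, edgeProb p α n e * (x e.1 * x e.2) := by
  have hsum : ∑ e ∈ edges n, edgeProb p α n e * (x e.1 * x e.2) =
      p n * ((firstHalfSum n x ^ 2 + secondHalfSum n x ^ 2 - ∑ i, x i ^ 2) / 2) +
        α n * p n * (firstHalfSum n x * secondHalfSum n x) := by
    rw [← sum_innerEdge_mul, ← sum_outerEdge_mul, Finset.mul_sum, Finset.mul_sum]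
    simp only [edgeProb, ite_mul, sum_edges_ite, Finset.mul_sum, mul_ite, mul_zero]
  rw [hsum, ← firstHalfSum_add_secondHalfSum]
  obtain ⟨hα0, hα1⟩ := hα
  have hsq₁ : 0 ≤ (1 - α n) * (firstHalfSum n x - secondHalfSum n x) ^ 2 :=
    mul_nonneg (by linarith) (sq_nonneg _)
  have hsq₂ : 0 ≤ α n * (firstHalfSum n x + secondHalfSum n x) ^ 2 :=
    mul_nonneg hα0 (sq_nonneg _)
  nlinarith [mul_nonneg hp hsq₁, mul_nonneg hp hsq₂]

lemma edgeMass_div_two_sub_le (hp : 0 ≤ p n) (hα : α n ∈ Set.Icc 0 1) (σ : Fin n → Bool) :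
    edgeMass p α n / 2 - p n * n / 4 ≤
      p n * ((cardInnerPlus n σ : ℝ) + α n * (cardOuterPlus n σ : ℝ)) := by
  have h := mul_le_sum_edges_edgeProb_mul hp hα fun i => spin (σ i)
  simp only [spin_sq, Finset.sum_const, Finset.card_univ, Fintype.card_fin, nsmul_eq_mul,
    mul_one] at h
  rw [mul_cardInnerPlus_add_eq_sum_edges, edgeMass, Finset.sum_div]
  simp only [ite_eq_one_add_spin_mul_div_two]
  have : 0 ≤ p n * (∑ i, spin (σ i)) ^ 2 := mul_nonneg hp (sq_nonneg _)
  rw [show ∑ e ∈ edges n, (1 + spin (σ e.1) * spin (σ e.2)) / 2 * edgeProb p α n e =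
    ∑ e ∈ edges n, edgeProb p α n e / 2 +
      (∑ e ∈ edges n, edgeProb p α n e * (spin (σ e.1) * spin (σ e.2))) / 2 by
    rw [Finset.sum_div, ← Finset.sum_add_distrib]
    exact Finset.sum_congr rfl fun e _ => by ring]
  nlinarith

lemma le_edgeMass (hp : 0 ≤ p n) (hα : α n ∈ Set.Icc 0 1) :
    p n * n * (n - 2) / 4 ≤ edgeMass p α n := by
  have h := mul_le_sum_edges_edgeProb_mul hp hα fun _ => (1 : ℝ)
  simp only [Finset.sum_const, Finset.card_univ, Fintype.card_fin, nsmul_eq_mul, mul_one,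
    one_pow] at h
  rw [edgeMass]; nlinarith

end Edges

section SBM

variable {Ω : Type*} [MeasurableSpace Ω] {P : Measure Ω} {p α : ℕ → ℝ}
  {ξ ζ : ℕ → ℕ × ℕ → Ω → ℝ} {n : ℕ}

def edgeIndex (n : ℕ) (e : edges n) : {x : (ℕ × ℕ) ⊕ (ℕ × ℕ) // isEdge n x} :=
  if h : innerEdge n e.1.1 e.1.2 then ⟨.inl (e.1.1, e.1.2), h⟩
  else ⟨.inr (e.1.1, e.1.2), (Finset.mem_filter.mp e.2).2.resolve_left h⟩

lemma edgeIndex_injective (n : ℕ) : Function.Injective (edgeIndex n) := by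
  rintro ⟨⟨i, j⟩, hij⟩ ⟨⟨i', j'⟩, hij'⟩ h
  simp only [edgeIndex] at h
  split_ifs at h <;> simpa [Fin.ext_iff] using congrArg Subtype.val h

lemma SBMHyp.iIndepFun_edgeVar (h : SBMHyp P p α ξ ζ) (n : ℕ) :
    iIndepFun (fun e : edges n => edgeVar ξ ζ n e) P := by
  convert (h.2.2 n).precomp (edgeIndex_injective n) using 1
  ext e ω
  simp only [edgeIndex, edgeVar]
  split_ifs <;> rfl

lemma SBMHyp.isBernoulli_edgeVar (h : SBMHyp P p α ξ ζ) {e : Fin n × Fin n} (he : e ∈ edges n) :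
    IsBernoulli P (edgeVar ξ ζ n e) (edgeProb p α n e) := by
  unfold edgeVar edgeProb
  split_ifs with hin
  · exact h.1 n _ _ hin
  · exact h.2.1 n _ _ ((Finset.mem_filter.mp he).2.resolve_left hin)

lemma SBMHyp.measure_ge_abs_edgeDeviation_le [IsProbabilityMeasure P] (h : SBMHyp P p α ξ ζ)
    (hp : 0 ≤ p n) (hα : 0 ≤ α n) {w : Fin n × Fin n → ℝ} (hw : ∀ e, |w e| ≤ 1) {t : ℝ}
    (ht0 : 0 ≤ t) (ht1 : t ≤ 1) (s : ℝ) :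
    P {ω | s ≤ |edgeDeviation p α ξ ζ n w ω|} ≤
      ENNReal.ofReal (2 * Real.exp (t ^ 2 * (1 + t) / 2 *
        ∑ e ∈ edges n, edgeProb p α n e * w e ^ 2 - t * s)) := by
  have := measure_ge_abs_sum_bernoulli_le (h.iIndepFun_edgeVar n)
    (fun e => h.isBernoulli_edgeVar e.2) (fun e => edgeProb_nonneg hp hα e) (fun e => hw e)
    ht0 ht1 s
  simp only [edgeDeviation]
  simp_rw [← Finset.sum_coe_sort (edges n)]
  exact this

-- In both tail bounds `t` is the optimal Chernoff parameter: the threshold divided by the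
-- variance proxy `edgeMass / 4`.
lemma SBMHyp.measure_ge_abs_edgeDeviation_half_le [IsProbabilityMeasure P]
    (h : SBMHyp P p α ξ ζ) (hp : 0 ≤ p n) (hα : 0 ≤ α n) {R : ℝ} (hR : 1 ≤ R) :
    P {ω | edgeMass p α n / (8 * R) ≤ |edgeDeviation p α ξ ζ n (fun _ => 1 / 2) ω|} ≤
      ENNReal.ofReal (2 * Real.exp (-(edgeMass p α n / R ^ 2) / 64)) := by
  refine (h.measure_ge_abs_edgeDeviation_le hp hα (fun _ => by norm_num [abs_div])
    (t := 1 / (2 * R)) (by positivity) (by rw [div_le_one (by positivity)]; linarith)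
    _).trans (ENNReal.ofReal_le_ofReal ?_)
  have hM := edgeMass_nonneg hp hα
  rw [← Finset.sum_mul, ← edgeMass]
  gcongr
  field_simp
  nlinarith

lemma SBMHyp.measure_ge_abs_edgeDeviation_spin_le [IsProbabilityMeasure P]
    (h : SBMHyp P p α ξ ζ) (hp : 0 ≤ p n) (hα : 0 ≤ α n) {R : ℝ} (hR : 125 ≤ R)
    (σ : Fin n → Bool) :
    P {ω | 5 * edgeMass p α n / (4 * R) ≤
        |edgeDeviation p α ξ ζ n (fun e => spin (σ e.1) * spin (σ e.2) / 2) ω|} ≤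
      ENNReal.ofReal (2 * Real.exp (-3 * (edgeMass p α n / R ^ 2))) := by
  refine (h.measure_ge_abs_edgeDeviation_le hp hα
    (fun e => by rw [abs_div, abs_mul]; cases σ e.1 <;> cases σ e.2 <;> norm_num [spin])
    (t := 5 / R) (by positivity) (by rw [div_le_one (by positivity)]; linarith)
    _).trans (ENNReal.ofReal_le_ofReal ?_)
  have hM := edgeMass_nonneg hp hα
  simp only [div_pow, mul_pow, spin_sq, one_mul]
  rw [← Finset.sum_mul, ← edgeMass]
  gcongr
  field_simp
  nlinarith

end SBM

section Concentration

variable {Ω : Type*} {p α ρ : ℕ → ℝ}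
  {ξ ζ : ℕ → ℕ × ℕ → Ω → ℝ} {n : ℕ}

lemma goodEvent_compl_subset (hp : 0 ≤ p n) (hα : α n ∈ Set.Icc 0 1) (hρ : 0 ≤ ρ n) {a b : ℝ}
    (hab : a + b ≤ ρ n * (edgeMass p α n / 2 - p n * n / 4)) :
    (goodEvent p α ρ ξ ζ n)ᶜ ⊆ {ω | a ≤ |edgeDeviation p α ξ ζ n (fun _ => 1 / 2) ω|} ∪
      ⋃ σ : Fin n → Bool,
        {ω | b ≤ |edgeDeviation p α ξ ζ n (fun e => spin (σ e.1) * spin (σ e.2) / 2) ω|} := by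
  intro ω hω
  by_contra hsmall
  simp only [Set.mem_union, Set.mem_iUnion, Set.mem_ofPred_eq, not_or, not_exists,
    not_le] at hsmall
  refine hω fun σ => ?_
  rw [plusSum_sub_eq_edgeDeviation_add]
  calc _ ≤ _ := abs_add_le _ _
    _ ≤ a + b := by linarith [hsmall.1, hsmall.2 σ]
    _ ≤ _ := hab.trans (mul_le_mul_of_nonneg_left (edgeMass_div_two_sub_le hp hα σ) hρ)

lemma two_mul_exp_add_two_pow_mul_exp_le {K : ℝ} (hK : ((n : ℝ) - 2) / 4 ≤ K) :
    2 * Real.exp (-K / 64) + 2 ^ n * (2 * Real.exp (-3 * K)) ≤ 4 * Real.exp (2 - n / 256) := by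
  have h₁ : Real.exp (-K / 64) ≤ Real.exp (2 - n / 256) := Real.exp_le_exp.mpr (by linarith)
  have h₂ : 2 ^ n * Real.exp (-3 * K) ≤ Real.exp (2 - n / 256) := by
    rw [← Real.exp_log (by positivity : (0 : ℝ) < 2 ^ n), Real.log_pow, ← Real.exp_add]
    refine Real.exp_le_exp.mpr ?_
    nlinarith [Real.log_two_lt_d9]
  linarith

lemma measure_goodEvent_compl_le [MeasurableSpace Ω] {P : Measure Ω} [IsProbabilityMeasure P]
    (hSBM : SBMHyp P p α ξ ζ) (hp : p n ∈ Set.Ioc 0 1) (hα : α n ∈ Set.Icc 0 1)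
    (hρ : 3 / Real.sqrt (p n * n) ≤ ρ n) (hR : 125 ≤ Real.sqrt (p n * n)) :
    P (goodEvent p α ρ ξ ζ n)ᶜ ≤ ENNReal.ofReal (4 * Real.exp (2 - n / 256)) := by
  set R := Real.sqrt (p n * n)
  set M := edgeMass p α n
  obtain ⟨hp0, hp1⟩ := hp
  have hR2 : R ^ 2 = p n * n := Real.sq_sqrt (by positivity)
  have hRn : R ^ 2 ≤ n := hR2 ▸ mul_le_of_le_one_left (Nat.cast_nonneg n) hp1
  have hM : R ^ 2 * (n - 2) / 4 ≤ M := hR2 ▸ le_edgeMass hp0.le hα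
  have hn : 26 ≤ (n : ℝ) := by nlinarith
  have hM6 : 6 * R ^ 2 ≤ M := by nlinarith [mul_nonneg (sq_nonneg R) (sub_nonneg.mpr hn)]
  have hab : M / (8 * R) + 5 * M / (4 * R) ≤ ρ n * (M / 2 - p n * n / 4) := by
    rw [← hR2]
    calc _ ≤ 3 / R * (M / 2 - R ^ 2 / 4) := by
          rw [div_add_div _ _ (by positivity) (by positivity), div_le_iff₀ (by positivity)]
          field_simp; linarith
      _ ≤ _ := mul_le_mul_of_nonneg_right hρ (by linarith [sq_nonneg R])
  have hρ0 : 0 ≤ ρ n := (by positivity : (0 : ℝ) ≤ 3 / R).trans hρ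
  calc P (goodEvent p α ρ ξ ζ n)ᶜ
      ≤ _ := measure_mono (goodEvent_compl_subset hp0.le hα hρ0 hab)
    _ ≤ _ := measure_union_le _ _
    _ ≤ ENNReal.ofReal (2 * Real.exp (-(M / R ^ 2) / 64)) +
          ∑ _σ : Fin n → Bool, ENNReal.ofReal (2 * Real.exp (-3 * (M / R ^ 2))) := by
      refine add_le_add ?_ ((measure_iUnion_fintype_le _ _).trans
        (Finset.sum_le_sum fun σ _ => ?_))
      · exact hSBM.measure_ge_abs_edgeDeviation_half_le hp0.le hα.1 (R := R) (by linarith)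
      · exact hSBM.measure_ge_abs_edgeDeviation_spin_le hp0.le hα.1 hR σ
    _ = ENNReal.ofReal (2 * Real.exp (-(M / R ^ 2) / 64) +
          2 ^ n * (2 * Real.exp (-3 * (M / R ^ 2)))) := by
      rw [Finset.sum_const, Finset.card_univ, Fintype.card_fun, Fintype.card_bool,
        Fintype.card_fin, nsmul_eq_mul, ENNReal.ofReal_add (by positivity) (by positivity),
        ENNReal.ofReal_mul (p := 2 ^ n) (by positivity), ENNReal.ofReal_pow zero_le_two,
        ENNReal.ofReal_ofNat]
      push_cast; rfl
    _ ≤ _ := ENNReal.ofReal_le_ofReal <| two_mul_exp_add_two_pow_mul_exp_le <| by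
      rw [le_div_iff₀ (by positivity)]; linarith

end Concentration

theorem goodEvent_concentration_general
    {Ω : Type*} [MeasurableSpace Ω] (P : Measure Ω) [IsProbabilityMeasure P]
    (p α ρ : ℕ → ℝ)
    (hp : ∀ n, p n ∈ Set.Ioc (0 : ℝ) 1) (hα : ∀ n, α n ∈ Set.Icc (0 : ℝ) 1)
    (hnp : Tendsto (fun n : ℕ => (n : ℝ) * p n) atTop atTop)
    (ξ ζ : ℕ → ℕ × ℕ → Ω → ℝ) (hSBM : SBMHyp P p α ξ ζ)
    (hρlb : ∀ n, 3 / Real.sqrt (p n * n) ≤ ρ n) :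
    ∃ c₀ c₁ c₂ : ℝ, 0 < c₀ ∧ 0 < c₁ ∧ 0 < c₂ ∧ ∃ n₀ : ℕ,
      ∀ n : ℕ, Even n → n₀ ≤ n →
        P ((goodEvent p α ρ ξ ζ n)ᶜ) ≤
          ENNReal.ofReal (c₀ * (n : ℝ) ^ 2 *
            (Real.exp (-(n : ℝ) * c₁ / 2) + Real.exp (-(n : ℝ) * c₂ / 2))) := by
  obtain ⟨n₀, hn₀⟩ := eventually_atTop.mp (hnp.eventually_ge_atTop 15625)
  refine ⟨2 * Real.exp 2, 1 / 128, 1 / 128, by positivity, by norm_num, by norm_num, n₀,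
    fun n _ hn => ?_⟩
  have hpn : 15625 ≤ p n * n := mul_comm (n : ℝ) _ ▸ hn₀ n hn
  have hn1 : 1 ≤ (n : ℝ) := by nlinarith [(hp n).2, (hp n).1]
  have hR : 125 ≤ Real.sqrt (p n * n) := Real.le_sqrt_of_sq_le (by linarith)
  refine (measure_goodEvent_compl_le hSBM (hp n) (hα n) (hρlb n) hR).trans
    (ENNReal.ofReal_le_ofReal ?_)
  rw [Real.exp_sub, show -(n : ℝ) * (1 / 128) / 2 = -(n / 256) by ring, Real.exp_neg,
    div_eq_mul_inv]
  have hn2 : 1 ≤ (n : ℝ) ^ 2 := by nlinarith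
  have hpos : 0 < Real.exp 2 * (Real.exp (n / 256))⁻¹ := by positivity
  nlinarith [mul_le_mul_of_nonneg_right hn2 hpos.le]

/-- concentration of the random interaction: the complement of the good event
`Ω̄_n` has probability at most `c₀ n² (e^{−n c₁/2} + e^{−n c₂/2})` for all large even `n`. -/
theorem goodEvent_concentration
    {Ω : Type*} [MeasurableSpace Ω] (P : Measure Ω) [IsProbabilityMeasure P]
    (p α ρ : ℕ → ℝ)
    (hp : ∀ n, p n ∈ Set.Ioc (0 : ℝ) 1) (hα : ∀ n, α n ∈ Set.Icc (0 : ℝ) 1)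
    (hnp : Tendsto (fun n : ℕ => (n : ℝ) * p n) atTop atTop)
    (ξ ζ : ℕ → ℕ × ℕ → Ω → ℝ) (hSBM : SBMHyp P p α ξ ζ)
    (hρpos : ∀ n, 0 < ρ n) (hρ0 : Tendsto ρ atTop (nhds 0))
    (hρlb : ∀ n, 3 / Real.sqrt (p n * n) ≤ ρ n) :
    ∃ c₀ c₁ c₂ : ℝ, 0 < c₀ ∧ 0 < c₁ ∧ 0 < c₂ ∧ ∃ n₀ : ℕ,
      ∀ n : ℕ, Even n → n₀ ≤ n →
        P ((goodEvent p α ρ ξ ζ n)ᶜ) ≤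
          ENNReal.ofReal (c₀ * (n : ℝ) ^ 2 *
            (Real.exp (-(n : ℝ) * c₁ / 2) + Real.exp (-(n : ℝ) * c₂ / 2))) :=
  goodEvent_concentration_general P p α ρ hp hα hnp ξ ζ hSBM hρlb

end
end

section
/- Comparison of Hamiltonians on the good event: for every even n, every ω ∈ Ω̄_n, and every configuration σ ∈ X_n, the difference Δ_n(σ) = H_n(σ) − H̄_n(σ) between the random Hamiltonian and the bipartite Curie–Weiss Hamiltonian satisfies |Δ_n(σ)| ≤ (3/2) n ρ_n. -/
/-!
Since `σᵢσⱼ = 2·[σᵢ = σⱼ] − 1`, both Hamiltonians have the form `−(2 W(σ) − W(+)) / (n p)`, where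
`W(σ)` is the weight of the aligned edges `E⁺(σ)` (the random weight `Σ_{E⁺(σ)} (ξ + ζ)` for `H_n`,
its mean `p (|E_I⁺(σ)| + α |E_E⁺(σ)|)` for `H̄_n`) and `+` is the all-plus configuration, for which
every edge is aligned. On `Ω̄_n` both deviations are at most `ρ` times the mean, and the mean at `σ`
is at most the mean at `+`, which is at most `p n² / 2`; hence `|Δ| ≤ 3 ρ p n² / (2 n p)`.
-/

open MeasureTheory ProbabilityTheory Finset Filter

noncomputable section

lemma spin_mul_spin (a b : Bool) : spin a * spin b = 2 * (if a = b then 1 else 0) - 1 := by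
  cases a <;> cases b <;> norm_num [spin]

lemma sum_ite_mul_spin_mul_spin {n : ℕ} (E : ℕ → ℕ → Prop) [DecidableRel E]
    (w : Fin n → Fin n → ℝ) (σ : Fin n → Bool) :
    (∑ i : Fin n, ∑ j : Fin n, if E i j then w i j * spin (σ i) * spin (σ j) else 0) =
      2 * (∑ i : Fin n, ∑ j : Fin n, if E i j ∧ σ i = σ j then w i j else 0) -
        ∑ i : Fin n, ∑ j : Fin n, if E i j then w i j else 0 := by
  simp only [Finset.mul_sum, ← Finset.sum_sub_distrib]
  refine Finset.sum_congr rfl fun i _ => Finset.sum_congr rfl fun j _ => ?_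
  rw [mul_assoc, spin_mul_spin]
  split_ifs <;> simp_all; ring

lemma Hrand_eq_plusSum {Ω : Type*} (p : ℕ → ℝ) (ξ ζ : ℕ → ℕ × ℕ → Ω → ℝ) (n : ℕ)
    (σ : Fin n → Bool) (ω : Ω) :
    Hrand p ξ ζ n σ ω =
      -(2 * plusSum ξ ζ n σ ω - plusSum ξ ζ n (fun _ => true) ω) / (n * p n) := by
  simp only [Hrand, plusSum, sum_ite_mul_spin_mul_spin, and_true]
  ring

lemma HcwE_eq_Hrand (a : ℝ) (n : ℕ) (σ : Fin n → Bool) :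
    HcwE a n σ = Hrand (fun _ => 1) (fun _ _ _ => 1) (fun _ _ _ => a) n σ () := by
  simp only [HcwE, Hrand, mul_one, one_mul, mul_assoc, ← mul_ite_zero, ← Finset.mul_sum]
  ring

/-- `𝔼[Σ_{E⁺(σ)} (ξ + ζ)] = p (|E_I⁺(σ)| + α |E_E⁺(σ)|)`, the centring used in `goodEvent`. -/
def alignedMean (q a : ℝ) (n : ℕ) (σ : Fin n → Bool) : ℝ :=
  q * ((cardInnerPlus n σ : ℝ) + a * (cardOuterPlus n σ : ℝ))

lemma plusSum_const_weights (a : ℝ) (n : ℕ) (σ : Fin n → Bool) :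
    plusSum (fun _ _ _ => 1) (fun _ _ _ => a) n σ () = alignedMean 1 a n σ := by
  simp only [plusSum, alignedMean, cardInnerPlus, cardOuterPlus, Finset.card_filter, one_mul,
    Nat.cast_sum, Nat.cast_ite, Nat.cast_one, Nat.cast_zero, Fintype.sum_prod_type,
    Finset.mul_sum, mul_ite, mul_one, mul_zero]

lemma HcwE_eq_alignedMean {q : ℝ} (hq : q ≠ 0) (a : ℝ) (n : ℕ) (σ : Fin n → Bool) :
    HcwE a n σ =
      -(2 * alignedMean q a n σ - alignedMean q a n (fun _ => true)) / (n * q) := by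
  rw [HcwE_eq_Hrand, Hrand_eq_plusSum, plusSum_const_weights, plusSum_const_weights,
    ← mul_div_mul_right _ _ hq]
  simp only [alignedMean]
  ring

lemma Hrand_sub_HcwE_eq {Ω : Type*} {p : ℕ → ℝ} {n : ℕ} (hp : p n ≠ 0) (a : ℝ)
    (ξ ζ : ℕ → ℕ × ℕ → Ω → ℝ) (σ : Fin n → Bool) (ω : Ω) :
    Hrand p ξ ζ n σ ω - HcwE a n σ =
      -(2 * (plusSum ξ ζ n σ ω - alignedMean (p n) a n σ) -
        (plusSum ξ ζ n (fun _ => true) ω - alignedMean (p n) a n (fun _ => true))) /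
          (n * p n) := by
  rw [Hrand_eq_plusSum, HcwE_eq_alignedMean hp]
  ring

lemma cardInnerPlus_add_cardOuterPlus_le_choose (n : ℕ) (σ : Fin n → Bool) :
    cardInnerPlus n σ + cardOuterPlus n σ ≤ n.choose 2 := by
  have h := Finset.card_product_filter_lt (s := (Finset.univ : Finset (Fin n)))
  simp only [Finset.card_univ, Fintype.card_fin, Finset.univ_product_univ] at h
  rw [← h, cardInnerPlus, cardOuterPlus, ← Finset.card_union_of_disjoint]
  · refine Finset.card_le_card fun e he => ?_
    simp only [Finset.mem_union, Finset.mem_filter, Finset.mem_univ, true_and] at he ⊢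
    rw [Fin.lt_def]
    rcases he with ⟨⟨h, -⟩, -⟩ | ⟨⟨h₁, h₂, -⟩, -⟩ <;> omega
  · rw [Finset.disjoint_filter]
    rintro e - ⟨⟨-, -, hI⟩, -⟩ ⟨⟨h₁, h₂, -⟩, -⟩
    omega

lemma cardInnerPlus_add_cardOuterPlus_le_sq (n : ℕ) (σ : Fin n → Bool) :
    (cardInnerPlus n σ + cardOuterPlus n σ : ℝ) ≤ n ^ 2 / 2 := by
  have h := cardInnerPlus_add_cardOuterPlus_le_choose n σ
  rw [← Nat.cast_le (α := ℝ), Nat.cast_add, Nat.cast_choose_two] at h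
  nlinarith [n.cast_nonneg (α := ℝ)]

lemma alignedMean_le_const {q a : ℝ} (hq : 0 ≤ q) (ha : 0 ≤ a) (n : ℕ) (σ : Fin n → Bool)
    (b : Bool) : alignedMean q a n σ ≤ alignedMean q a n (fun _ => b) := by
  have hI : cardInnerPlus n σ ≤ cardInnerPlus n (fun _ => b) :=
    Finset.card_le_card fun e he => by simp_all
  have hO : cardOuterPlus n σ ≤ cardOuterPlus n (fun _ => b) :=
    Finset.card_le_card fun e he => by simp_all
  unfold alignedMean
  gcongr

lemma alignedMean_le_sq {q a : ℝ} (hq : 0 ≤ q) (ha : a ≤ 1) (n : ℕ) (σ : Fin n → Bool) :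
    alignedMean q a n σ ≤ q * (n ^ 2 / 2) := by
  have h := cardInnerPlus_add_cardOuterPlus_le_sq n σ
  unfold alignedMean
  gcongr
  nlinarith [(cardOuterPlus n σ).cast_nonneg (α := ℝ)]

theorem hamiltonian_comparison_on_goodEvent_general
    {Ω : Type*} (p α ρ : ℕ → ℝ)
    (hp : ∀ n, p n ∈ Set.Ioc (0 : ℝ) 1) (hα : ∀ n, α n ∈ Set.Icc (0 : ℝ) 1)
    (ξ ζ : ℕ → ℕ × ℕ → Ω → ℝ)
    (hρpos : ∀ n, 0 < ρ n) :
    ∀ n : ℕ, Even n → ∀ ω ∈ goodEvent p α ρ ξ ζ n, ∀ σ : Fin n → Bool,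
      |Hrand p ξ ζ n σ ω - HcwE (α n) n σ| ≤ (3 / 2) * n * ρ n := by
  intro n _ ω hω σ
  rcases Nat.eq_zero_or_pos n with rfl | hn
  · simp [Hrand, HcwE]
  obtain ⟨hp0, -⟩ := hp n
  obtain ⟨hα0, hα1⟩ := hα n
  have hρ := (hρpos n).le
  have hnp : (0 : ℝ) < n * p n := by positivity
  set M := alignedMean (p n) (α n) n
  set S := fun τ => plusSum ξ ζ n τ ω
  have hM : M σ ≤ M (fun _ => true) := alignedMean_le_const hp0.le hα0 n σ true
  have hX : |2 * (S σ - M σ) - (S (fun _ => true) - M (fun _ => true))| ≤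
      3 * ρ n * M (fun _ => true) :=
    calc _ ≤ 2 * |S σ - M σ| + |S (fun _ => true) - M (fun _ => true)| := by
          simpa [abs_mul] using abs_sub (2 * (S σ - M σ)) _
      _ ≤ 2 * (ρ n * M σ) + ρ n * M (fun _ => true) := by gcongr <;> apply hω
      _ ≤ 3 * ρ n * M (fun _ => true) := by nlinarith
  rw [Hrand_sub_HcwE_eq hp0.ne', abs_div, abs_neg, abs_of_pos hnp, div_le_iff₀ hnp]
  calc _ ≤ 3 * ρ n * M (fun _ => true) := hX
    _ ≤ 3 * ρ n * (p n * (n ^ 2 / 2)) := by gcongr; exact alignedMean_le_sq hp0.le hα1 n _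
    _ = 3 / 2 * n * ρ n * (n * p n) := by ring

/-- on the good event `Ω̄_n`, the random Hamiltonian and the bipartite
Curie–Weiss Hamiltonian differ by at most `(3/2) n ρ_n`, uniformly in the configuration. -/
theorem hamiltonian_comparison_on_goodEvent
    {Ω : Type*} [MeasurableSpace Ω] (P : Measure Ω) [IsProbabilityMeasure P]
    (p α ρ : ℕ → ℝ)
    (hp : ∀ n, p n ∈ Set.Ioc (0 : ℝ) 1) (hα : ∀ n, α n ∈ Set.Icc (0 : ℝ) 1)
    (hnp : Tendsto (fun n : ℕ => (n : ℝ) * p n) atTop atTop)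
    (ξ ζ : ℕ → ℕ × ℕ → Ω → ℝ) (hSBM : SBMHyp P p α ξ ζ)
    (hρpos : ∀ n, 0 < ρ n) (hρ0 : Tendsto ρ atTop (nhds 0))
    (hρlb : ∀ n, 3 / Real.sqrt (p n * n) ≤ ρ n) :
    ∀ n : ℕ, Even n → ∀ ω ∈ goodEvent p α ρ ξ ζ n, ∀ σ : Fin n → Bool,
      |Hrand p ξ ζ n σ ω - HcwE (α n) n σ| ≤ (3 / 2) * n * ρ n :=
  hamiltonian_comparison_on_goodEvent_general p α ρ hp hα ξ ζ hρpos

end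
end
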